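/- arXiv:1810.11005 — 3 statements merged into one kernel-verified Lean document; each statement's English description precedes it below -/
import Mathlib

section
/- Let n ∈ ℕ and let (X_k)_{k≥n} be a family of subsets of [0,1] such that each X_k is summably measurable with some measure μ_k satisfying μ_k > 1 − (3/4)^k. Then the intersection ⋂_{k≥n} X_k is summably measurable with some measure μ satisfying μ > 1 − 4·(3/4)^n. -/
open MeasureTheory Filter Set

noncomputable section

/-- A sequence of functions on `[0,1]` is *regular* if each member is continuous and
nonnegative on `[0,1]` and has integral over `[0,1]` strictly less than `2⁻ⁿ`. -/
def RegularSeq (h : ℕ → ℝ → ℝ) : Prop :=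
  ∀ n : ℕ, ContinuousOn (h n) (Set.Icc 0 1) ∧
    (∀ x ∈ Set.Icc (0:ℝ) 1, 0 ≤ h n x) ∧
    (∫ x in (0:ℝ)..1, h n x) < (1/2 : ℝ) ^ n

/-- The set `Ω(𝔥)` of points of `[0,1]` at which the partial sums of `∑ hₙ(x)` are
bounded above. -/
def Omega (h : ℕ → ℝ → ℝ) : Set ℝ :=
  {x ∈ Set.Icc (0:ℝ) 1 | ∃ γ : ℝ, ∀ m : ℕ, ∑ n ∈ Finset.range (m+1), h n x ≤ γ}

/-- A subset `X ⊆ [0,1]` is *almost full* if `Ω(𝔥) ⊆ X` for some regular sequence `𝔥`. -/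
def AlmostFull (X : Set ℝ) : Prop :=
  ∃ h : ℕ → ℝ → ℝ, RegularSeq h ∧ Omega h ⊆ X

/-- `f : D → ℝ` is *summable with integral `I`* if there are an almost full set `Y ⊆ D`
and continuous functions `Fₙ` on `[0,1]` with `∫₀¹ |Fₙ₊₁ - Fₙ| < 2⁻ⁿ`, `Fₙ(x) → f(x)`
on `Y`, and `∫₀¹ Fₙ → I`. -/
def SummableWithIntegral (D : Set ℝ) (f : ℝ → ℝ) (I : ℝ) : Prop :=
  ∃ (Y : Set ℝ) (F : ℕ → ℝ → ℝ),
    AlmostFull Y ∧ Y ⊆ D ∧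
    (∀ n : ℕ, ContinuousOn (F n) (Set.Icc 0 1)) ∧
    (∀ n : ℕ, (∫ x in (0:ℝ)..1, |F (n+1) x - F n x|) < (1/2 : ℝ) ^ n) ∧
    (∀ x ∈ Y, Tendsto (fun n => F n x) atTop (nhds (f x))) ∧
    Tendsto (fun n => ∫ x in (0:ℝ)..1, F n x) atTop (nhds I)

/-- `X ⊆ [0,1]` is *summably measurable with measure `μ`* if its indicator function is
summable with integral `μ`. -/
def SummablyMeasurable (X : Set ℝ) (μ : ℝ) : Prop :=
  SummableWithIntegral (Set.Icc 0 1) (X.indicator fun _ => (1:ℝ)) μ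

namespace S15

def cl (x : ℝ) : ℝ := max 0 (min 1 x)

lemma cl_nonneg (x : ℝ) : 0 ≤ cl x := le_max_left _ _
lemma cl_le_one (x : ℝ) : cl x ≤ 1 := max_le zero_le_one (min_le_left _ _)
lemma cl_lip (a b : ℝ) : |cl a - cl b| ≤ |a - b| := by
  have h1 : |cl a - cl b| ≤ |min 1 a - min 1 b| := by
    unfold cl
    rw [max_comm 0 (min 1 a), max_comm 0 (min 1 b)]
    exact abs_max_sub_max_le_abs _ _ _
  refine h1.trans ((abs_min_sub_min_le_max 1 a 1 b).trans ?_)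
  simp
lemma cl_of_mem {x : ℝ} (h0 : 0 ≤ x) (h1 : x ≤ 1) : cl x = x := by
  unfold cl; rw [min_eq_right h1, max_eq_right h0]
lemma continuous_cl : Continuous cl :=
  continuous_const.max (continuous_const.min continuous_id)

lemma uIcc01 : Set.uIcc (0:ℝ) 1 = Set.Icc 0 1 := Set.uIcc_of_le zero_le_one

lemma contInt {f : ℝ → ℝ} (hf : ContinuousOn f (Set.Icc 0 1)) :
    IntervalIntegrable f volume 0 1 := by
  apply ContinuousOn.intervalIntegrable; rwa [uIcc01]

lemma abs_sub_le_sum_Ico (f : ℕ → ℝ) (a b : ℕ) (hab : a ≤ b) :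
    |f b - f a| ≤ ∑ j ∈ Finset.Ico a b, |f (j+1) - f j| := by
  induction b, hab using Nat.le_induction with
  | base => simp
  | succ b hab ih =>
    rw [Finset.sum_Ico_succ_top hab]
    calc |f (b+1) - f a| ≤ |f (b+1) - f b| + |f b - f a| := abs_sub_le _ _ _
      _ ≤ |f (b+1) - f b| + ∑ j ∈ Finset.Ico a b, |f (j+1) - f j| := by linarith
      _ = _ := by ring

lemma one_sub_sum_le_prod (s : Finset ℕ) (f : ℕ → ℝ) (h0 : ∀ i, 0 ≤ f i) (h1 : ∀ i, f i ≤ 1) :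
    1 - ∑ i ∈ s, (1 - f i) ≤ ∏ i ∈ s, f i := by
  induction s using Finset.cons_induction with
  | empty => simp
  | cons a s ha ih =>
    rw [Finset.prod_cons, Finset.sum_cons]
    have hp : ∏ i ∈ s, f i ≤ 1 := Finset.prod_le_one (fun i _ => h0 i) (fun i _ => h1 i)
    nlinarith [h0 a, h1 a, mul_nonneg (sub_nonneg.2 (h1 a)) (sub_nonneg.2 hp)]

lemma abs_prod_sub_prod_le (a b : ℕ → ℝ) (ha0 : ∀ i, 0 ≤ a i) (ha1 : ∀ i, a i ≤ 1)
    (hb0 : ∀ i, 0 ≤ b i) (hb1 : ∀ i, b i ≤ 1) (B : ℕ) :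
    |∏ i ∈ Finset.range B, a i - ∏ i ∈ Finset.range B, b i| ≤
      ∑ i ∈ Finset.range B, |a i - b i| := by
  induction B with
  | zero => simp
  | succ B ih =>
    rw [Finset.prod_range_succ, Finset.prod_range_succ, Finset.sum_range_succ]
    set P := ∏ i ∈ Finset.range B, a i with hP
    set Q := ∏ i ∈ Finset.range B, b i with hQ
    have key : P * a B - Q * b B = (P - Q) * a B + Q * (a B - b B) := by ring
    have hQ0 : 0 ≤ Q := Finset.prod_nonneg fun i _ => hb0 i
    have hQ1 : Q ≤ 1 := Finset.prod_le_one (fun i _ => hb0 i) (fun i _ => hb1 i)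
    have haB : |a B| ≤ 1 := by rw [abs_of_nonneg (ha0 B)]; exact ha1 B
    have hQabs : |Q| ≤ 1 := by rw [abs_of_nonneg hQ0]; exact hQ1
    calc |P * a B - Q * b B| ≤ |P - Q| * |a B| + |Q| * |a B - b B| := by
          rw [key]
          exact (abs_add_le _ _).trans (by rw [abs_mul, abs_mul])
      _ ≤ (∑ i ∈ Finset.range B, |a i - b i|) * 1 + 1 * |a B - b B| := by
          have h1 : |P - Q| * |a B| ≤ (∑ i ∈ Finset.range B, |a i - b i|) * 1 := by
            apply mul_le_mul ih haB (abs_nonneg _) (Finset.sum_nonneg fun i _ => abs_nonneg _)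
          have h2 : |Q| * |a B - b B| ≤ 1 * |a B - b B| :=
            mul_le_mul_of_nonneg_right hQabs (abs_nonneg _)
          linarith
      _ = _ := by ring

lemma prod_diff_bound (a b : ℕ → ℝ) (ha0 : ∀ i, 0 ≤ a i) (ha1 : ∀ i, a i ≤ 1)
    (hb0 : ∀ i, 0 ≤ b i) (hb1 : ∀ i, b i ≤ 1) (B A : ℕ) (hBA : B ≤ A) :
    |∏ i ∈ Finset.range A, a i - ∏ i ∈ Finset.range B, b i| ≤
      (∑ i ∈ Finset.range B, |a i - b i|) + ∑ i ∈ Finset.Ico B A, (1 - a i) := by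
  have hsplit : ∏ i ∈ Finset.range A, a i =
      (∏ i ∈ Finset.range B, a i) * ∏ i ∈ Finset.Ico B A, a i := by
    rw [Finset.range_eq_Ico, Finset.range_eq_Ico]
    exact (Finset.prod_Ico_consecutive a (Nat.zero_le B) hBA).symm
  have h1 : |∏ i ∈ Finset.range A, a i - ∏ i ∈ Finset.range B, a i| ≤
      ∑ i ∈ Finset.Ico B A, (1 - a i) := by
    rw [hsplit]
    have : (∏ i ∈ Finset.range B, a i) * ∏ i ∈ Finset.Ico B A, a i -
        ∏ i ∈ Finset.range B, a i =
        (∏ i ∈ Finset.range B, a i) * (∏ i ∈ Finset.Ico B A, a i - 1) := by ring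
    rw [this, abs_mul]
    have hP0 : 0 ≤ ∏ i ∈ Finset.range B, a i := Finset.prod_nonneg fun i _ => ha0 i
    have hP1 : ∏ i ∈ Finset.range B, a i ≤ 1 := Finset.prod_le_one (fun i _ => ha0 i) (fun i _ => ha1 i)
    have hQ0 : 0 ≤ ∏ i ∈ Finset.Ico B A, a i := Finset.prod_nonneg fun i _ => ha0 i
    have hQ1 : ∏ i ∈ Finset.Ico B A, a i ≤ 1 := Finset.prod_le_one (fun i _ => ha0 i) (fun i _ => ha1 i)
    have hQ2 : 1 - ∑ i ∈ Finset.Ico B A, (1 - a i) ≤ ∏ i ∈ Finset.Ico B A, a i :=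
      one_sub_sum_le_prod _ _ ha0 ha1
    rw [abs_of_nonneg hP0, abs_of_nonpos (by linarith)]
    nlinarith
  calc |∏ i ∈ Finset.range A, a i - ∏ i ∈ Finset.range B, b i|
      ≤ |∏ i ∈ Finset.range B, a i - ∏ i ∈ Finset.range B, b i| +
        |∏ i ∈ Finset.range A, a i - ∏ i ∈ Finset.range B, a i| := by
        have := abs_sub_le (∏ i ∈ Finset.range A, a i) (∏ i ∈ Finset.range B, a i)
          (∏ i ∈ Finset.range B, b i)
        linarith
    _ ≤ _ := by
        have := abs_prod_sub_prod_le a b ha0 ha1 hb0 hb1 B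
        linarith

lemma sum_half_pow_le {e : ℕ → ℕ} (K N : ℕ) (he : ∀ i, K + i ≤ e i) :
    ∑ i ∈ Finset.range N, ((1:ℝ)/2)^(e i) ≤ 2 * (1/2)^K := by
  calc ∑ i ∈ Finset.range N, ((1:ℝ)/2)^(e i)
      ≤ ∑ i ∈ Finset.range N, ((1:ℝ)/2)^(K + i) := by
        apply Finset.sum_le_sum
        intro i _
        exact pow_le_pow_of_le_one (by norm_num) (by norm_num) (he i)
    _ = (1/2)^K * ∑ i ∈ Finset.range N, ((1:ℝ)/2)^i := by
        rw [Finset.mul_sum]; congr 1; ext i; rw [pow_add]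
    _ ≤ (1/2)^K * 2 := by
        apply mul_le_mul_of_nonneg_left (sum_geometric_two_le N) (by positivity)
    _ = 2 * (1/2)^K := by ring

lemma sum_geom34_le (n N : ℕ) : ∑ i ∈ Finset.range N, ((3:ℝ)/4)^(n+i) ≤ 4 * (3/4)^n := by
  have : ∑ i ∈ Finset.range N, ((3:ℝ)/4)^(n+i) = (3/4)^n * ∑ i ∈ Finset.range N, ((3:ℝ)/4)^i := by
    rw [Finset.mul_sum]; congr 1; ext i; rw [pow_add]
  rw [this]
  have h2 : ∑ i ∈ Finset.range N, ((3:ℝ)/4)^i = ((3/4)^N - 1)/((3:ℝ)/4 - 1) :=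
    geom_sum_eq (by norm_num) N
  have h3 : ((3:ℝ)/4)^N ≥ 0 := by positivity
  have h4 : ∑ i ∈ Finset.range N, ((3:ℝ)/4)^i ≤ 4 := by rw [h2]; rw [div_le_iff_of_neg (by norm_num)]; nlinarith
  nlinarith [pow_nonneg (by norm_num : (0:ℝ) ≤ 3/4) n]

lemma sum_range_five_mul (f : ℕ → ℝ) (M : ℕ) :
    ∑ i ∈ Finset.range (5*M), f i = ∑ m ∈ Finset.range M, ∑ t ∈ Finset.range 5, f (5*m+t) := by
  induction M with
  | zero => simp
  | succ M ih =>
    rw [Finset.sum_range_succ, ← ih, show 5*(M+1) = 5*M+1+1+1+1+1 by ring]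
    simp only [Finset.sum_range_succ, Finset.sum_range_zero]
    rw [show 5*M+1+1 = 5*M+2 by ring, show 5*M+1+1+1 = 5*M+3 by ring,
      show 5*M+1+1+1+1 = 5*M+4 by ring, show 5*M+0 = 5*M by ring]
    ring

lemma tsum_ofReal_le {a : ℕ → ℝ} {γ : ℝ} (h0 : ∀ i, 0 ≤ a i)
    (hb : ∀ M, ∑ i ∈ Finset.range M, a i ≤ γ) :
    ∑' i, ENNReal.ofReal (a i) ≤ ENNReal.ofReal γ := by
  rw [ENNReal.tsum_eq_iSup_sum]
  apply iSup_le
  intro s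
  obtain ⟨M, hM⟩ := s.exists_nat_subset_range
  calc ∑ i ∈ s, ENNReal.ofReal (a i) ≤ ∑ i ∈ Finset.range M, ENNReal.ofReal (a i) :=
        Finset.sum_le_sum_of_subset hM
    _ = ENNReal.ofReal (∑ i ∈ Finset.range M, a i) :=
        (ENNReal.ofReal_sum_of_nonneg fun i _ => h0 i).symm
    _ ≤ _ := ENNReal.ofReal_le_ofReal (hb M)



end S15

namespace S15

lemma omega_ae {h : ℕ → ℝ → ℝ} (hreg : RegularSeq h) :
    ∀ᵐ x ∂(volume.restrict (Set.Ioc (0:ℝ) 1)), x ∈ Omega h := by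
  set μr := volume.restrict (Set.Ioc (0:ℝ) 1) with hμr
  have hmeas : ∀ j, AEMeasurable (fun x => ENNReal.ofReal (h j x)) μr :=
    fun j => ENNReal.measurable_ofReal.comp_aemeasurable
      (((hreg j).1.mono Set.Ioc_subset_Icc_self).aemeasurable measurableSet_Ioc)
  have hle : ∀ j, ∫⁻ x, ENNReal.ofReal (h j x) ∂μr ≤ ENNReal.ofReal ((1/2)^j) := by
    intro j
    have hInt : IntegrableOn (h j) (Set.Ioc 0 1) volume :=
      ((hreg j).1.integrableOn_Icc).mono_set Set.Ioc_subset_Icc_self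
    have hnn : 0 ≤ᵐ[μr] h j :=
      (ae_restrict_iff' measurableSet_Ioc).2 (ae_of_all _ fun x hx =>
        (hreg j).2.1 x (Set.Ioc_subset_Icc_self hx))
    rw [← MeasureTheory.ofReal_integral_eq_lintegral_ofReal hInt hnn]
    apply ENNReal.ofReal_le_ofReal
    have : ∫ x, h j x ∂μr = ∫ x in (0:ℝ)..1, h j x :=
      (intervalIntegral.integral_of_le zero_le_one).symm
    rw [this]
    exact ((hreg j).2.2).le
  have htot : ∫⁻ x, (∑' j, ENNReal.ofReal (h j x)) ∂μr ≠ ⊤ := by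
    rw [lintegral_tsum hmeas]
    refine ne_top_of_le_ne_top ?_ (ENNReal.tsum_le_tsum hle)
    rw [← ENNReal.ofReal_tsum_of_nonneg (fun j => by positivity) summable_geometric_two]
    exact ENNReal.ofReal_ne_top
  have hae : ∀ᵐ x ∂μr, (∑' j, ENNReal.ofReal (h j x)) < ⊤ :=
    ae_lt_top' (AEMeasurable.ennreal_tsum hmeas) htot
  filter_upwards [hae, ae_restrict_mem measurableSet_Ioc] with x hx hx2
  refine ⟨Set.Ioc_subset_Icc_self hx2, (∑' j, ENNReal.ofReal (h j x)).toReal, fun m => ?_⟩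
  have h1 : ∀ j, 0 ≤ h j x := fun j => (hreg j).2.1 x (Set.Ioc_subset_Icc_self hx2)
  calc ∑ j ∈ Finset.range (m+1), h j x
      = (ENNReal.ofReal (∑ j ∈ Finset.range (m+1), h j x)).toReal := by
        rw [ENNReal.toReal_ofReal (Finset.sum_nonneg fun j _ => h1 j)]
    _ ≤ _ := by
        rw [ENNReal.ofReal_sum_of_nonneg (fun j _ => h1 j)]
        exact ENNReal.toReal_mono hx.ne (ENNReal.sum_le_tsum _)

lemma tele {F : ℕ → ℝ → ℝ} (hFc : ∀ j, ContinuousOn (F j) (Set.Icc 0 1))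
    (hFd : ∀ j, (∫ x in (0:ℝ)..1, |F (j+1) x - F j x|) ≤ (1/2)^j) (a b : ℕ) (hab : a ≤ b) :
    (∫ x in (0:ℝ)..1, |F b x - F a x|) ≤ 2 * (1/2)^a - 2 * (1/2)^b := by
  induction b, hab using Nat.le_induction with
  | base => simp
  | succ b hab ih =>
    have hint : ∀ (u v : ℕ), IntervalIntegrable (fun x => |F u x - F v x|) volume 0 1 :=
      fun u v => contInt (((hFc u).sub (hFc v)).abs)
    have step : (∫ x in (0:ℝ)..1, |F (b+1) x - F a x|) ≤
        (∫ x in (0:ℝ)..1, |F (b+1) x - F b x|) + ∫ x in (0:ℝ)..1, |F b x - F a x| := by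
      rw [← intervalIntegral.integral_add (hint (b+1) b) (hint b a)]
      apply intervalIntegral.integral_mono_on zero_le_one (hint (b+1) a)
        ((hint (b+1) b).add (hint b a))
      intro x _
      exact abs_sub_le _ _ _
    have h2 : ((1:ℝ)/2)^(b+1) = (1/2)^b/2 := by rw [pow_succ]; ring
    calc (∫ x in (0:ℝ)..1, |F (b+1) x - F a x|)
        ≤ (1/2)^b + (2 * (1/2)^a - 2 * (1/2)^b) := by
          have := hFd b
          linarith [step, ih]
      _ = 2 * (1/2)^a - 2 * (1/2)^(b+1) := by rw [h2]; ring

lemma key {Xs : Set ℝ} {μ : ℝ} (hm : SummablyMeasurable Xs μ) :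
    ∃ (h : ℕ → ℝ → ℝ) (G : ℕ → ℝ → ℝ),
      RegularSeq h ∧
      (∀ j, ContinuousOn (G j) (Set.Icc 0 1)) ∧
      (∀ j x, 0 ≤ G j x) ∧ (∀ j x, G j x ≤ 1) ∧
      (∀ a b : ℕ, a ≤ b → (∫ x in (0:ℝ)..1, |G b x - G a x|) ≤ 2 * (1/2)^a) ∧
      (∀ x ∈ Omega h, Tendsto (fun j => G j x) atTop (nhds (Xs.indicator (fun _ => 1) x))) ∧
      (∀ j, (∫ x in (0:ℝ)..1, (1 - G j x)) ≤ (1 - μ) + 2 * (1/2)^j) := by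
  obtain ⟨Y, F, ⟨h, hreg, hΩY⟩, hYD, hFc, hFd, hFt, hFI⟩ := hm
  classical
  set g : ℝ → ℝ := Xs.indicator (fun _ => 1) with hg
  have hg0 : ∀ x, 0 ≤ g x := fun x => Set.indicator_nonneg (fun _ _ => zero_le_one) x
  have hg1 : ∀ x, g x ≤ 1 := by
    intro x; by_cases hx : x ∈ Xs <;> simp [hg, hx]
  set μr := volume.restrict (Set.Ioc (0:ℝ) 1) with hμr
  have haetend : ∀ᵐ x ∂μr, Tendsto (fun j => F j x) atTop (nhds (g x)) := by
    filter_upwards [omega_ae hreg] with x hx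
    exact hFt x (hΩY hx)
  have hFInt : ∀ j, IntegrableOn (F j) (Set.Ioc 0 1) volume :=
    fun j => ((hFc j).integrableOn_Icc).mono_set Set.Ioc_subset_Icc_self
  have hFmeas : ∀ j, AEStronglyMeasurable (F j) μr := fun j => (hFInt j).aestronglyMeasurable
  have hFd' : ∀ j, (∫ x in (0:ℝ)..1, |F (j+1) x - F j x|) ≤ (1/2)^j := fun j => (hFd j).le
  have tel : ∀ a b : ℕ, a ≤ b → (∫ x in (0:ℝ)..1, |F b x - F a x|) ≤ 2*(1/2)^a := by
    intro a b hab
    have h1 := tele hFc hFd' a b hab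
    have h2 : (0:ℝ) ≤ 2*(1/2:ℝ)^b := by positivity
    linarith
  have hfatou : ∀ j, ∫⁻ x, ENNReal.ofReal |g x - F j x| ∂μr ≤ ENNReal.ofReal (2*(1/2)^j) := by
    intro j
    have hmeas2 : ∀ m : ℕ, AEMeasurable (fun x => ENNReal.ofReal |F m x - F j x|) μr := by
      intro m
      exact ENNReal.measurable_ofReal.comp_aemeasurable
        (((((hFc m).sub (hFc j)).abs).mono Set.Ioc_subset_Icc_self).aemeasurable
          measurableSet_Ioc)
    have heq : ∀ᵐ x ∂μr, ENNReal.ofReal |g x - F j x| =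
        Filter.liminf (fun m => ENNReal.ofReal |F m x - F j x|) atTop := by
      filter_upwards [haetend] with x hx
      have h2 : Tendsto (fun m => ENNReal.ofReal |F m x - F j x|) atTop
          (nhds (ENNReal.ofReal |g x - F j x|)) := by
        apply (ENNReal.continuous_ofReal.tendsto _).comp
        exact (hx.sub tendsto_const_nhds).abs
      exact h2.liminf_eq.symm
    calc ∫⁻ x, ENNReal.ofReal |g x - F j x| ∂μr
        = ∫⁻ x, Filter.liminf (fun m => ENNReal.ofReal |F m x - F j x|) atTop ∂μr :=
          lintegral_congr_ae heq
      _ ≤ Filter.liminf (fun m => ∫⁻ x, ENNReal.ofReal |F m x - F j x| ∂μr) atTop :=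
          lintegral_liminf_le' hmeas2
      _ ≤ ENNReal.ofReal (2*(1/2)^j) := by
          apply Filter.liminf_le_of_frequently_le _ (by isBoundedDefault)
          apply Filter.Eventually.frequently
          filter_upwards [Filter.eventually_ge_atTop j] with m hm
          have hInt : IntegrableOn (fun x => |F m x - F j x|) (Set.Ioc 0 1) volume :=
            ((((hFc m).sub (hFc j)).abs).integrableOn_Icc).mono_set Set.Ioc_subset_Icc_self
          have hnn : 0 ≤ᵐ[μr] fun x => |F m x - F j x| := ae_of_all _ fun x => abs_nonneg _
          rw [← MeasureTheory.ofReal_integral_eq_lintegral_ofReal hInt hnn]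
          apply ENNReal.ofReal_le_ofReal
          have heq2 : ∫ x, |F m x - F j x| ∂μr = ∫ x in (0:ℝ)..1, |F m x - F j x| :=
            (intervalIntegral.integral_of_le zero_le_one).symm
          rw [heq2]
          exact tel j m hm
  have hgmeas : AEStronglyMeasurable g μr := by
    have := aemeasurable_of_tendsto_metrizable_ae atTop
      (fun j => (hFmeas j).aemeasurable) haetend
    exact this.aestronglyMeasurable
  have hgFint : ∀ j, Integrable (fun x => g x - F j x) μr := by
    intro j
    refine ⟨hgmeas.sub (hFmeas j), ?_⟩
    rw [hasFiniteIntegral_iff_norm]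
    have heq3 : ∫⁻ a, ENNReal.ofReal ‖g a - F j a‖ ∂μr
        = ∫⁻ a, ENNReal.ofReal |g a - F j a| ∂μr := by
      simp [Real.norm_eq_abs]
    rw [heq3]
    exact lt_of_le_of_lt (hfatou j) ENNReal.ofReal_lt_top
  have hgint : Integrable g μr := by
    have h6 := (hgFint 0).add (hFInt 0)
    have h7 : ((fun x => g x - F 0 x) + F 0) = g := by funext x; simp
    rwa [h7] at h6
  have hl1 : ∀ j, (∫ x, |g x - F j x| ∂μr) ≤ 2*(1/2)^j := by
    intro j
    have h1 : ENNReal.ofReal (∫ x, |g x - F j x| ∂μr) ≤ ENNReal.ofReal (2*(1/2)^j) := by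
      rw [MeasureTheory.ofReal_integral_eq_lintegral_ofReal ((hgFint j).abs)
        (ae_of_all _ fun x => abs_nonneg _)]
      exact hfatou j
    rwa [ENNReal.ofReal_le_ofReal_iff (by positivity)] at h1
  have hFIμ : Tendsto (fun j => ∫ x, F j x ∂μr) atTop (nhds μ) := by
    have heq4 : ∀ j, ∫ x, F j x ∂μr = ∫ x in (0:ℝ)..1, F j x :=
      fun j => (intervalIntegral.integral_of_le zero_le_one).symm
    simpa only [heq4] using hFI
  have hgμ : ∫ x, g x ∂μr = μ := by
    have hdist : ∀ j, |(∫ x, F j x ∂μr) - ∫ x, g x ∂μr| ≤ 2*(1/2)^j := by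
      intro j
      rw [abs_sub_comm, ← integral_sub hgint (hFInt j)]
      calc |∫ x, (g x - F j x) ∂μr| ≤ ∫ x, |g x - F j x| ∂μr := by
            simpa [Real.norm_eq_abs] using
              norm_integral_le_integral_norm (μ := μr) (fun x => g x - F j x)
        _ ≤ 2*(1/2)^j := hl1 j
    have hz : Tendsto (fun j => (∫ x, F j x ∂μr) - ∫ x, g x ∂μr) atTop (nhds 0) := by
      apply squeeze_zero_norm (fun j => hdist j)
      · have := (tendsto_pow_atTop_nhds_zero_of_lt_one
          (by norm_num : (0:ℝ) ≤ 1/2) (by norm_num : (1:ℝ)/2 < 1)).const_mul (2:ℝ)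
        simpa [mul_comm] using this
    have htendg : Tendsto (fun j => ∫ x, F j x ∂μr) atTop (nhds (∫ x, g x ∂μr)) := by
      have h8 := hz.add (tendsto_const_nhds (x := ∫ x, g x ∂μr) (f := atTop))
      simpa using h8
    exact tendsto_nhds_unique htendg hFIμ
  refine ⟨h, fun j x => cl (F j x), hreg, ?_, ?_, ?_, ?_, ?_, ?_⟩
  · exact fun j => continuous_cl.comp_continuousOn (hFc j)
  · exact fun j x => cl_nonneg _
  · exact fun j x => cl_le_one _
  · intro a b hab
    have hmono : (∫ x in (0:ℝ)..1, |cl (F b x) - cl (F a x)|)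
        ≤ ∫ x in (0:ℝ)..1, |F b x - F a x| := by
      apply intervalIntegral.integral_mono_on zero_le_one
        (contInt (((continuous_cl.comp_continuousOn (hFc b)).sub
          (continuous_cl.comp_continuousOn (hFc a))).abs))
        (contInt (((hFc b).sub (hFc a)).abs))
      intro x _
      exact cl_lip _ _
    exact hmono.trans (tel a b hab)
  · intro x hx
    have h1 : Tendsto (fun j => F j x) atTop (nhds (g x)) := hFt x (hΩY hx)
    have h2 : Tendsto (fun j => cl (F j x)) atTop (nhds (cl (g x))) :=
      ((continuous_cl.tendsto _).comp h1)
    rwa [cl_of_mem (hg0 x) (hg1 x)] at h2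
  · intro j
    have hGc : ContinuousOn (fun x => cl (F j x)) (Set.Icc 0 1) :=
      continuous_cl.comp_continuousOn (hFc j)
    have hGInt : IntegrableOn (fun x => cl (F j x)) (Set.Ioc 0 1) volume :=
      (hGc.integrableOn_Icc).mono_set Set.Ioc_subset_Icc_self
    have hcl : ∀ x, |g x - cl (F j x)| ≤ |g x - F j x| := by
      intro x
      have h5 := cl_lip (g x) (F j x)
      rwa [cl_of_mem (hg0 x) (hg1 x)] at h5
    have habs2 : Integrable (fun x => |g x - cl (F j x)|) μr := by
      apply Integrable.mono' ((hgFint j).abs)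
      · have h9 := (hgmeas.sub hGInt.aestronglyMeasurable).norm
        simpa [Real.norm_eq_abs] using h9
      · exact ae_of_all _ fun x => by rw [Real.norm_eq_abs, abs_abs]; exact hcl x
    have h3 : (∫ x, (g x - cl (F j x)) ∂μr) ≤ 2*(1/2)^j :=
      calc ∫ x, (g x - cl (F j x)) ∂μr ≤ ∫ x, |g x - cl (F j x)| ∂μr :=
            integral_mono (hgint.sub hGInt) habs2 (fun x => le_abs_self _)
        _ ≤ ∫ x, |g x - F j x| ∂μr := integral_mono habs2 ((hgFint j).abs) hcl
        _ ≤ 2*(1/2)^j := hl1 j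
    have h5 : ∫ x, (g x - cl (F j x)) ∂μr = μ - ∫ x, cl (F j x) ∂μr := by
      rw [integral_sub hgint hGInt, hgμ]
    have h4 : (∫ x in (0:ℝ)..1, (1 - cl (F j x))) = 1 - ∫ x, cl (F j x) ∂μr := by
      rw [intervalIntegral.integral_sub (contInt continuousOn_const) (contInt hGc),
        intervalIntegral.integral_of_le zero_le_one]
      rw [hμr]
      simp
      exact intervalIntegral.integral_of_le zero_le_one
    rw [h4]
    rw [h5] at h3
    linarith

lemma intInt_sum {ι : Type*} (s : Finset ι) {f : ι → ℝ → ℝ}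
    (h : ∀ i ∈ s, IntervalIntegrable (f i) volume 0 1) :
    IntervalIntegrable (fun x => ∑ i ∈ s, f i x) volume 0 1 := by
  have h2 := IntervalIntegrable.sum s h
  have h3 : (∑ i ∈ s, f i) = fun x => ∑ i ∈ s, f i x := by
    funext x; simp
  rwa [h3] at h2

end S15


set_option maxHeartbeats 1000000

open S15

/-- If each `X_k` (`k ≥ n`) is summably measurable with measure `μ_k > 1 - (3/4)ᵏ`, then
`⋂_{k ≥ n} X_k` is summably measurable with some measure `μ > 1 - 4·(3/4)ⁿ`. -/
theorem stmt15 (n : ℕ) (X : ℕ → Set ℝ) (hX : ∀ k, n ≤ k → X k ⊆ Set.Icc 0 1)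
    (μ : ℕ → ℝ)
    (hmeas : ∀ k, n ≤ k → SummablyMeasurable (X k) (μ k))
    (hμ : ∀ k, n ≤ k → 1 - (3/4 : ℝ)^k < μ k) :
    ∃ ν : ℝ, SummablyMeasurable (⋂ k, ⋂ _ : n ≤ k, X k) ν ∧
      1 - 4 * (3/4 : ℝ)^n < ν := by
  classical
  choose h G hreg hGc hG0 hG1 hGd hGt hGi using
    fun i : ℕ => S15.key (hmeas (n+i) (Nat.le_add_right n i))
  set Z := ⋂ k, ⋂ _ : n ≤ k, X k with hZ
  set Fs : ℕ → ℝ → ℝ := fun m x => ∏ i ∈ Finset.range (5*m+21), G i (2*m+2*i+12) x with hFs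
  set H : ℕ → ℝ → ℝ := fun m x =>
    (∑ i ∈ Finset.range (m+1), (1/2:ℝ)^(i+3) * h i (m+3) x)
    + (1/32) * (∑ i ∈ Finset.range (m+1), |G i (m+i+12+1) x - G i (m+i+12) x|)
    + (1/32) * (∑ t ∈ Finset.range 5, (1 - G (5*m+t) (2*(5*m+t)+12) x)) with hH
  clear_value Z Fs H
  -- basic numeric facts
  have hμ' : ∀ i : ℕ, 1 - μ (n+i) ≤ (3/4:ℝ)^(n+i) := by
    intro i
    have := hμ (n+i) (Nat.le_add_right n i)
    linarith
  have hmono34 : ∀ a b : ℕ, a ≤ b → ((3:ℝ)/4)^b ≤ (3/4)^a :=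
    fun a b hab => pow_le_pow_of_le_one (by norm_num) (by norm_num) hab
  have hmono12 : ∀ a b : ℕ, a ≤ b → ((1:ℝ)/2)^b ≤ (1/2)^a :=
    fun a b hab => pow_le_pow_of_le_one (by norm_num) (by norm_num) hab
  have hpow5 : ∀ m : ℕ, ((3:ℝ)/4)^(5*m) ≤ (1/2)^(2*m) := by
    intro m
    have h51 : ((3:ℝ)/4)^(5*m) = (((3:ℝ)/4)^5)^m := by rw [← pow_mul]
    have h52 : ((1:ℝ)/2)^(2*m) = (((1:ℝ)/2)^2)^m := by rw [← pow_mul]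
    rw [h51, h52]
    apply pow_le_pow_left₀ (by positivity) (by norm_num)
  have h34n : ∀ i : ℕ, ((3:ℝ)/4)^(n+i) ≤ (3/4)^i :=
    fun i => hmono34 i (n+i) (by omega)
  -- continuity of H
  have hHc : ∀ m, ContinuousOn (H m) (Set.Icc 0 1) := by
    intro m
    rw [hH]
    apply ContinuousOn.add
    apply ContinuousOn.add
    · exact continuousOn_finset_sum _ fun i _ => continuousOn_const.mul (hreg i (m+3)).1
    · exact continuousOn_const.mul (continuousOn_finset_sum _ fun i _ =>
        ((hGc i _).sub (hGc i _)).abs)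
    · exact continuousOn_const.mul (continuousOn_finset_sum _ fun t _ =>
        continuousOn_const.sub (hGc _ _))
  -- nonnegativity of parts of H
  have hP1nn : ∀ m x, x ∈ Set.Icc (0:ℝ) 1 →
      0 ≤ ∑ i ∈ Finset.range (m+1), (1/2:ℝ)^(i+3) * h i (m+3) x :=
    fun m x hx => Finset.sum_nonneg fun i _ =>
      mul_nonneg (by positivity) ((hreg i (m+3)).2.1 x hx)
  have hP2nn : ∀ m x, (0:ℝ) ≤ ∑ i ∈ Finset.range (m+1), |G i (m+i+12+1) x - G i (m+i+12) x| :=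
    fun m x => Finset.sum_nonneg fun i _ => abs_nonneg _
  have hP3nn : ∀ m x, (0:ℝ) ≤ ∑ t ∈ Finset.range 5, (1 - G (5*m+t) (2*(5*m+t)+12) x) :=
    fun m x => Finset.sum_nonneg fun t _ => by linarith [hG1 (5*m+t) (2*(5*m+t)+12) x]
  have hHnn : ∀ m x, x ∈ Set.Icc (0:ℝ) 1 → 0 ≤ H m x := by
    intro m x hx
    rw [hH]
    have := hP1nn m x hx; have := hP2nn m x; have := hP3nn m x
    positivity
  -- integral of H
  have hHint : ∀ m, (∫ x in (0:ℝ)..1, H m x) < (1/2)^m := by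
    intro m
    have i1 : ∀ i : ℕ, IntervalIntegrable (fun x => (1/2:ℝ)^(i+3) * h i (m+3) x) volume 0 1 :=
      fun i => contInt (continuousOn_const.mul (hreg i (m+3)).1)
    have i2 : ∀ i : ℕ, IntervalIntegrable
        (fun x => |G i (m+i+12+1) x - G i (m+i+12) x|) volume 0 1 :=
      fun i => contInt ((hGc i _).sub (hGc i _)).abs
    have i3 : ∀ t : ℕ, IntervalIntegrable
        (fun x => 1 - G (5*m+t) (2*(5*m+t)+12) x) volume 0 1 :=
      fun t => contInt (continuousOn_const.sub (hGc _ _))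
    have I1 : IntervalIntegrable
        (fun x => ∑ i ∈ Finset.range (m+1), (1/2:ℝ)^(i+3) * h i (m+3) x) volume 0 1 :=
      intInt_sum (Finset.range (m+1)) fun i _ => i1 i
    have I2 : IntervalIntegrable
        (fun x => ∑ i ∈ Finset.range (m+1), |G i (m+i+12+1) x - G i (m+i+12) x|) volume 0 1 :=
      intInt_sum (Finset.range (m+1)) fun i _ => i2 i
    have I3 : IntervalIntegrable
        (fun x => ∑ t ∈ Finset.range 5, (1 - G (5*m+t) (2*(5*m+t)+12) x)) volume 0 1 :=
      intInt_sum (Finset.range 5) fun t _ => i3 t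
    have e0 : (∫ x in (0:ℝ)..1, H m x)
        = (∫ x in (0:ℝ)..1, ∑ i ∈ Finset.range (m+1), (1/2:ℝ)^(i+3) * h i (m+3) x)
        + (1/32) * (∫ x in (0:ℝ)..1, ∑ i ∈ Finset.range (m+1), |G i (m+i+12+1) x - G i (m+i+12) x|)
        + (1/32) * (∫ x in (0:ℝ)..1, ∑ t ∈ Finset.range 5, (1 - G (5*m+t) (2*(5*m+t)+12) x)) := by
      rw [hH]
      rw [intervalIntegral.integral_add (I1.add (I2.const_mul _)) (I3.const_mul _),
        intervalIntegral.integral_add I1 (I2.const_mul _),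
        intervalIntegral.integral_const_mul, intervalIntegral.integral_const_mul]
    have b1 : (∫ x in (0:ℝ)..1, ∑ i ∈ Finset.range (m+1), (1/2:ℝ)^(i+3) * h i (m+3) x)
        ≤ 2*(1/2:ℝ)^(m+6) := by
      rw [intervalIntegral.integral_finset_sum fun i _ => i1 i]
      calc ∑ i ∈ Finset.range (m+1), ∫ x in (0:ℝ)..1, (1/2:ℝ)^(i+3) * h i (m+3) x
          ≤ ∑ i ∈ Finset.range (m+1), (1/2:ℝ)^(i+3+(m+3)) := by
            apply Finset.sum_le_sum
            intro i _
            rw [intervalIntegral.integral_const_mul,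
              show ((1:ℝ)/2)^(i+3+(m+3)) = (1/2)^(i+3) * (1/2)^(m+3) from pow_add _ _ _]
            exact mul_le_mul_of_nonneg_left ((hreg i (m+3)).2.2).le (by positivity)
        _ ≤ 2*(1/2:ℝ)^(m+6) := sum_half_pow_le (m+6) (m+1) (fun i => by omega)
    have b2 : (∫ x in (0:ℝ)..1, ∑ i ∈ Finset.range (m+1), |G i (m+i+12+1) x - G i (m+i+12) x|)
        ≤ 4*(1/2:ℝ)^(m+12) := by
      rw [intervalIntegral.integral_finset_sum fun i _ => i2 i]
      calc ∑ i ∈ Finset.range (m+1), ∫ x in (0:ℝ)..1, |G i (m+i+12+1) x - G i (m+i+12) x|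
          ≤ ∑ i ∈ Finset.range (m+1), 2*(1/2:ℝ)^(m+i+12) := by
            apply Finset.sum_le_sum
            intro i _
            exact hGd i (m+i+12) (m+i+12+1) (by omega)
        _ = 2 * ∑ i ∈ Finset.range (m+1), (1/2:ℝ)^(m+i+12) := by rw [Finset.mul_sum]
        _ ≤ 2 * (2*(1/2:ℝ)^(m+12)) := by
            apply mul_le_mul_of_nonneg_left
              (sum_half_pow_le (m+12) (m+1) (fun i => by omega)) (by norm_num)
        _ = 4*(1/2:ℝ)^(m+12) := by ring
    have b3 : (∫ x in (0:ℝ)..1, ∑ t ∈ Finset.range 5, (1 - G (5*m+t) (2*(5*m+t)+12) x))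
        ≤ 15*(1/2:ℝ)^m := by
      rw [intervalIntegral.integral_finset_sum fun t _ => i3 t]
      have hterm : ∀ t ∈ Finset.range 5,
          (∫ x in (0:ℝ)..1, (1 - G (5*m+t) (2*(5*m+t)+12) x)) ≤ 3*(1/2:ℝ)^m := by
        intro t _
        have h1 := hGi (5*m+t) (2*(5*m+t)+12)
        have h2 : (1:ℝ) - μ (n+(5*m+t)) ≤ (3/4)^(5*m+t) :=
          (hμ' (5*m+t)).trans (h34n (5*m+t))
        have h3 : ((3:ℝ)/4)^(5*m+t) ≤ (1/2)^(2*m) :=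
          (hmono34 (5*m) (5*m+t) (by omega)).trans (hpow5 m)
        have h4 : ((1:ℝ)/2)^(2*m) ≤ (1/2)^m := hmono12 m (2*m) (by omega)
        have h5 : 2*((1:ℝ)/2)^(2*(5*m+t)+12) ≤ 2*(1/2)^m := by
          apply mul_le_mul_of_nonneg_left (hmono12 m (2*(5*m+t)+12) (by omega)) (by norm_num)
        linarith
      calc ∑ t ∈ Finset.range 5, ∫ x in (0:ℝ)..1, (1 - G (5*m+t) (2*(5*m+t)+12) x)
          ≤ ∑ _t ∈ Finset.range 5, 3*(1/2:ℝ)^m := Finset.sum_le_sum hterm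
        _ = 15*(1/2:ℝ)^m := by simp [Finset.sum_const]; ring
    have hp6 : ((1:ℝ)/2)^(m+6) = (1/2)^m * (1/64) := by rw [pow_add]; norm_num
    have hp12 : ((1:ℝ)/2)^(m+12) = (1/2)^m * (1/4096) := by rw [pow_add]; norm_num
    have hpos : (0:ℝ) < (1/2)^m := by positivity
    rw [e0]
    rw [hp6] at b1; rw [hp12] at b2
    nlinarith [b1, b2, b3]
  have hHreg : RegularSeq H := fun m => ⟨hHc m, fun x hx => hHnn m x hx, hHint m⟩
  -- Fs basics
  have hFsc : ∀ m, ContinuousOn (Fs m) (Set.Icc 0 1) := by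
    intro m; rw [hFs]
    exact continuousOn_finset_prod _ fun i _ => hGc i _
  have hFs0 : ∀ m x, 0 ≤ Fs m x := by
    intro m x; rw [hFs]; exact Finset.prod_nonneg fun i _ => hG0 _ _ _
  have hFs1 : ∀ m x, Fs m x ≤ 1 := by
    intro m x; rw [hFs]
    exact Finset.prod_le_one (fun i _ => hG0 _ _ _) (fun i _ => hG1 _ _ _)
  have hFsInt : ∀ m, IntervalIntegrable (Fs m) volume 0 1 := fun m => contInt (hFsc m)
  -- L¹ increments of Fs
  have hFsd : ∀ m, (∫ x in (0:ℝ)..1, |Fs (m+1) x - Fs m x|) < (1/2)^m := by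
    intro m
    have hBA : 5*m+21 ≤ 5*(m+1)+21 := by omega
    have hptw : ∀ x, |Fs (m+1) x - Fs m x| ≤
        (∑ i ∈ Finset.range (5*m+21), |G i (2*(m+1)+2*i+12) x - G i (2*m+2*i+12) x|)
        + ∑ i ∈ Finset.Ico (5*m+21) (5*(m+1)+21), (1 - G i (2*(m+1)+2*i+12) x) := by
      intro x
      rw [hFs]
      exact prod_diff_bound (fun i => G i (2*(m+1)+2*i+12) x) (fun i => G i (2*m+2*i+12) x)
        (fun i => hG0 _ _ _) (fun i => hG1 _ _ _) (fun i => hG0 _ _ _) (fun i => hG1 _ _ _)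
        (5*m+21) (5*(m+1)+21) hBA
    have j1 : ∀ i : ℕ, IntervalIntegrable
        (fun x => |G i (2*(m+1)+2*i+12) x - G i (2*m+2*i+12) x|) volume 0 1 :=
      fun i => contInt ((hGc i _).sub (hGc i _)).abs
    have j2 : ∀ i : ℕ, IntervalIntegrable
        (fun x => 1 - G i (2*(m+1)+2*i+12) x) volume 0 1 :=
      fun i => contInt (continuousOn_const.sub (hGc _ _))
    have J1 : IntervalIntegrable (fun x => ∑ i ∈ Finset.range (5*m+21),
        |G i (2*(m+1)+2*i+12) x - G i (2*m+2*i+12) x|) volume 0 1 :=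
      intInt_sum (Finset.range (5*m+21)) fun i _ => j1 i
    have J2 : IntervalIntegrable (fun x => ∑ i ∈ Finset.Ico (5*m+21) (5*(m+1)+21),
        (1 - G i (2*(m+1)+2*i+12) x)) volume 0 1 :=
      intInt_sum (Finset.Ico (5*m+21) (5*(m+1)+21)) fun i _ => j2 i
    have hstep : (∫ x in (0:ℝ)..1, |Fs (m+1) x - Fs m x|) ≤
        (∑ i ∈ Finset.range (5*m+21), ∫ x in (0:ℝ)..1,
          |G i (2*(m+1)+2*i+12) x - G i (2*m+2*i+12) x|)
        + ∑ i ∈ Finset.Ico (5*m+21) (5*(m+1)+21), ∫ x in (0:ℝ)..1,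
          (1 - G i (2*(m+1)+2*i+12) x) := by
      rw [← intervalIntegral.integral_finset_sum fun i _ => j1 i,
        ← intervalIntegral.integral_finset_sum fun i _ => j2 i,
        ← intervalIntegral.integral_add J1 J2]
      apply intervalIntegral.integral_mono_on zero_le_one
        (contInt ((hFsc (m+1)).sub (hFsc m)).abs) (by exact (J1.add J2))
      intro x _
      exact hptw x
    have s1 : (∑ i ∈ Finset.range (5*m+21), ∫ x in (0:ℝ)..1,
        |G i (2*(m+1)+2*i+12) x - G i (2*m+2*i+12) x|) ≤ 4*(1/2:ℝ)^(2*m+12) := by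
      calc ∑ i ∈ Finset.range (5*m+21), ∫ x in (0:ℝ)..1,
            |G i (2*(m+1)+2*i+12) x - G i (2*m+2*i+12) x|
          ≤ ∑ i ∈ Finset.range (5*m+21), 2*(1/2:ℝ)^(2*m+2*i+12) := by
            apply Finset.sum_le_sum
            intro i _
            exact hGd i (2*m+2*i+12) (2*(m+1)+2*i+12) (by omega)
        _ = 2 * ∑ i ∈ Finset.range (5*m+21), (1/2:ℝ)^(2*m+2*i+12) := by rw [Finset.mul_sum]
        _ ≤ 2 * (2*(1/2:ℝ)^(2*m+12)) := by
            apply mul_le_mul_of_nonneg_left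
              (sum_half_pow_le (2*m+12) (5*m+21) (fun i => by omega)) (by norm_num)
        _ = 4*(1/2:ℝ)^(2*m+12) := by ring
    have s2 : (∑ i ∈ Finset.Ico (5*m+21) (5*(m+1)+21), ∫ x in (0:ℝ)..1,
        (1 - G i (2*(m+1)+2*i+12) x)) ≤ 5*((1/256)*(1/2:ℝ)^m + 2*(1/2:ℝ)^(m+20)) := by
      have hterm : ∀ i ∈ Finset.Ico (5*m+21) (5*(m+1)+21),
          (∫ x in (0:ℝ)..1, (1 - G i (2*(m+1)+2*i+12) x))
            ≤ (1/256)*(1/2:ℝ)^m + 2*(1/2:ℝ)^(m+20) := by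
        intro i hi
        rw [Finset.mem_Ico] at hi
        have h1 := hGi i (2*(m+1)+2*i+12)
        have h2 : (1:ℝ) - μ (n+i) ≤ (3/4)^i := (hμ' i).trans (h34n i)
        have h3 : ((3:ℝ)/4)^i ≤ (3/4)^(5*m+20) := hmono34 (5*m+20) i (by omega)
        have h4 : ((3:ℝ)/4)^(5*m+20) = (3/4)^(5*m) * (3/4)^20 := by rw [← pow_add]
        have h5 : ((3:ℝ)/4)^(5*m) ≤ (1/2)^m :=
          (hpow5 m).trans (hmono12 m (2*m) (by omega))
        have h6 : ((3:ℝ)/4)^(5*m+20) ≤ (1/256) * (1/2)^m := by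
          rw [h4]
          calc ((3:ℝ)/4)^(5*m) * (3/4)^20 ≤ (1/2)^m * (1/256) := by
                apply mul_le_mul h5 (by norm_num) (by positivity) (by positivity)
            _ = (1/256) * (1/2)^m := by ring
        have h7 : 2*((1:ℝ)/2)^(2*(m+1)+2*i+12) ≤ 2*(1/2)^(m+20) := by
          apply mul_le_mul_of_nonneg_left (hmono12 (m+20) (2*(m+1)+2*i+12) (by omega))
            (by norm_num)
        linarith
      calc (∑ i ∈ Finset.Ico (5*m+21) (5*(m+1)+21), ∫ x in (0:ℝ)..1,
            (1 - G i (2*(m+1)+2*i+12) x))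
          ≤ ∑ _i ∈ Finset.Ico (5*m+21) (5*(m+1)+21),
            ((1/256)*(1/2:ℝ)^m + 2*(1/2:ℝ)^(m+20)) := Finset.sum_le_sum hterm
        _ = 5*((1/256)*(1/2:ℝ)^m + 2*(1/2:ℝ)^(m+20)) := by
            rw [Finset.sum_const, Nat.card_Ico]
            norm_num
            ring
    have hpos : (0:ℝ) < (1/2)^m := by positivity
    have hq1 : ((1:ℝ)/2)^(2*m+12) ≤ (1/2)^m * (1/4096) := by
      rw [pow_add]
      apply mul_le_mul (hmono12 m (2*m) (by omega)) (by norm_num) (by positivity) (by positivity)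
    have hq2 : ((1:ℝ)/2)^(m+20) = (1/2)^m * (1/1048576) := by rw [pow_add]; norm_num
    calc (∫ x in (0:ℝ)..1, |Fs (m+1) x - Fs m x|) ≤ _ + _ := hstep
      _ < (1/2)^m := by nlinarith [s1, s2]
  -- Cauchy sequence of integrals
  have hcauchy : CauchySeq (fun m => ∫ x in (0:ℝ)..1, Fs m x) := by
    apply cauchySeq_of_le_geometric (1/2 : ℝ) 1 (by norm_num)
    intro m
    rw [dist_eq_norm, Real.norm_eq_abs, ← intervalIntegral.integral_sub (hFsInt m) (hFsInt (m+1))]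
    have e1 : (∫ x in (0:ℝ)..1, (Fs m x - Fs (m+1) x)) = - ∫ x in (0:ℝ)..1, (Fs (m+1) x - Fs m x) := by
      rw [← intervalIntegral.integral_neg]
      congr 1
      funext x
      ring
    rw [e1, abs_neg]
    calc |∫ x in (0:ℝ)..1, (Fs (m+1) x - Fs m x)|
        ≤ ∫ x in (0:ℝ)..1, |Fs (m+1) x - Fs m x| :=
          intervalIntegral.abs_integral_le_integral_abs zero_le_one
      _ ≤ 1 * (1/2)^m := by rw [one_mul]; exact (hFsd m).le
  obtain ⟨ν, hν⟩ := cauchySeq_tendsto_of_complete hcauchy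
  -- lower bound for ∫ Fs m
  have hlow : ∀ m, μ n - 3*(3/4:ℝ)^n - (1/2:ℝ)^m ≤ ∫ x in (0:ℝ)..1, Fs m x := by
    intro m
    have j2 : ∀ i : ℕ, IntervalIntegrable
        (fun x => 1 - G i (2*m+2*i+12) x) volume 0 1 :=
      fun i => contInt (continuousOn_const.sub (hGc _ _))
    have hptw : ∀ x, 1 - (∑ i ∈ Finset.range (5*m+21), (1 - G i (2*m+2*i+12) x)) ≤ Fs m x := by
      intro x
      rw [hFs]
      exact one_sub_sum_le_prod _ _ (fun i => hG0 _ _ _) (fun i => hG1 _ _ _)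
    have hint : (∫ x in (0:ℝ)..1,
        (1 - ∑ i ∈ Finset.range (5*m+21), (1 - G i (2*m+2*i+12) x))) ≤
        ∫ x in (0:ℝ)..1, Fs m x := by
      apply intervalIntegral.integral_mono_on zero_le_one
        ((contInt continuousOn_const).sub (intInt_sum (Finset.range (5*m+21)) fun i _ => j2 i))
        (hFsInt m)
      intro x _
      exact hptw x
    have e2 : (∫ x in (0:ℝ)..1,
        (1 - ∑ i ∈ Finset.range (5*m+21), (1 - G i (2*m+2*i+12) x)))
        = 1 - ∑ i ∈ Finset.range (5*m+21), ∫ x in (0:ℝ)..1, (1 - G i (2*m+2*i+12) x) := by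
      rw [intervalIntegral.integral_sub (contInt continuousOn_const)
        (intInt_sum (Finset.range (5*m+21)) fun i _ => j2 i),
        intervalIntegral.integral_finset_sum fun i _ => j2 i]
      norm_num
    have hsum : ∑ i ∈ Finset.range (5*m+21), (∫ x in (0:ℝ)..1, (1 - G i (2*m+2*i+12) x))
        ≤ (1 - μ n) + 3*(3/4:ℝ)^n + (1/2:ℝ)^m := by
      have hterm : ∀ i ∈ Finset.range (5*m+21),
          (∫ x in (0:ℝ)..1, (1 - G i (2*m+2*i+12) x))
            ≤ (1 - μ (n+i)) + 2*(1/2:ℝ)^(2*m+2*i+12) :=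
        fun i _ => hGi i (2*m+2*i+12)
      calc ∑ i ∈ Finset.range (5*m+21), (∫ x in (0:ℝ)..1, (1 - G i (2*m+2*i+12) x))
          ≤ ∑ i ∈ Finset.range (5*m+21), ((1 - μ (n+i)) + 2*(1/2:ℝ)^(2*m+2*i+12)) :=
            Finset.sum_le_sum hterm
        _ = (∑ i ∈ Finset.range (5*m+21), (1 - μ (n+i)))
            + 2 * ∑ i ∈ Finset.range (5*m+21), (1/2:ℝ)^(2*m+2*i+12) := by
            rw [Finset.sum_add_distrib, Finset.mul_sum]
        _ ≤ (1 - μ n) + 3*(3/4:ℝ)^n + (1/2:ℝ)^m := by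
            have hA : ∑ i ∈ Finset.range (5*m+21), (1 - μ (n+i))
                ≤ (1 - μ n) + 3*(3/4:ℝ)^n := by
              rw [Finset.sum_range_succ']
              have hA1 : ∑ i ∈ Finset.range (5*m+20), (1 - μ (n+(i+1)))
                  ≤ ∑ i ∈ Finset.range (5*m+20), ((3:ℝ)/4)^(n+1+i) := by
                apply Finset.sum_le_sum
                intro i _
                have := hμ' (i+1)
                calc 1 - μ (n+(i+1)) ≤ ((3:ℝ)/4)^(n+(i+1)) := this
                  _ = ((3:ℝ)/4)^(n+1+i) := by rw [show n+(i+1) = n+1+i by omega]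
              have hA2 : ∑ i ∈ Finset.range (5*m+20), ((3:ℝ)/4)^(n+1+i) ≤ 4*(3/4)^(n+1) :=
                sum_geom34_le (n+1) (5*m+20)
              have hA3 : 4*((3:ℝ)/4)^(n+1) = 3*(3/4)^n := by rw [pow_succ]; ring
              have : (n:ℕ) + 0 = n := by omega
              simp only [Nat.add_zero]
              linarith
            have hB : 2 * ∑ i ∈ Finset.range (5*m+21), ((1:ℝ)/2)^(2*m+2*i+12)
                ≤ (1/2:ℝ)^m := by
              calc 2 * ∑ i ∈ Finset.range (5*m+21), ((1:ℝ)/2)^(2*m+2*i+12)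
                  ≤ 2 * (2*(1/2:ℝ)^(2*m+12)) := by
                    apply mul_le_mul_of_nonneg_left
                      (sum_half_pow_le (2*m+12) (5*m+21) (fun i => by omega)) (by norm_num)
                _ ≤ (1/2:ℝ)^m := by
                    have h9 : ((1:ℝ)/2)^(2*m+12) ≤ (1/2)^m * (1/4096) := by
                      rw [pow_add]
                      apply mul_le_mul (hmono12 m (2*m) (by omega)) (by norm_num)
                        (by positivity) (by positivity)
                    have : (0:ℝ) < (1/2)^m := by positivity
                    nlinarith
            linarith
    have := hint
    rw [e2] at this
    linarith
  have hνlow : μ n - 3*(3/4:ℝ)^n ≤ ν := by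
    have htlow : Tendsto (fun m => μ n - 3*(3/4:ℝ)^n - (1/2:ℝ)^m) atTop
        (nhds (μ n - 3*(3/4:ℝ)^n)) := by
      have h1 : Tendsto (fun m : ℕ => ((1:ℝ)/2)^m) atTop (nhds 0) :=
        tendsto_pow_atTop_nhds_zero_of_lt_one (by norm_num) (by norm_num)
      have h2 := (tendsto_const_nhds (x := μ n - 3*(3/4:ℝ)^n) (f := atTop (α := ℕ))).sub h1
      simpa using h2
    exact le_of_tendsto_of_tendsto' htlow hν hlow
  -- pointwise convergence on Omega H
  have hconv : ∀ x ∈ Omega H, Tendsto (fun m => Fs m x) atTop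
      (nhds (Set.indicator Z (fun _ => 1) x)) := by
    intro x hx
    obtain ⟨hxI, γ, hγ⟩ := hx
    have h0γ : (0:ℝ) ≤ γ := le_trans (hHnn 0 x hxI) (by simpa using hγ 0)
    have hγ' : ∀ M, ∑ m' ∈ Finset.range M, H m' x ≤ γ := by
      intro M
      cases M with
      | zero => simpa using h0γ
      | succ M => exact hγ M
    have hHico : ∀ i T, ∑ t ∈ Finset.range T, H (i+t) x ≤ γ := by
      intro i T
      have e1 : ∑ m' ∈ Finset.Ico i (i+T), H m' x = ∑ t ∈ Finset.range T, H (i+t) x := by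
        rw [Finset.sum_Ico_eq_sum_range, Nat.add_sub_cancel_left]
      rw [← e1]
      calc ∑ m' ∈ Finset.Ico i (i+T), H m' x ≤ ∑ m' ∈ Finset.range (i+T), H m' x := by
            apply Finset.sum_le_sum_of_subset_of_nonneg
            · rw [Finset.range_eq_Ico]
              exact Finset.Ico_subset_Ico (Nat.zero_le i) le_rfl
            · exact fun m' _ _ => hHnn m' x hxI
        _ ≤ γ := hγ' _
    -- membership in each Omega (h i)
    have hΩi : ∀ i, x ∈ Omega (h i) := by
      intro i
      have hnn : ∀ j, 0 ≤ h i j x := fun j => (hreg i j).2.1 x hxI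
      refine ⟨hxI, (∑ j ∈ Finset.range (i+3), h i j x) + 2^(i+3) * γ, fun m => ?_⟩
      have h2γ : 0 ≤ (2:ℝ)^(i+3) * γ := mul_nonneg (by positivity) h0γ
      rcases le_or_gt (m+1) (i+3) with hc | hc
      · have h1 : ∑ j ∈ Finset.range (m+1), h i j x ≤ ∑ j ∈ Finset.range (i+3), h i j x :=
          Finset.sum_le_sum_of_subset_of_nonneg (Finset.range_subset_range.2 hc) (fun j _ _ => hnn j)
        linarith
      · have hsplit : ∑ j ∈ Finset.range (m+1), h i j x
            = ∑ j ∈ Finset.range (i+3), h i j x + ∑ j ∈ Finset.Ico (i+3) (m+1), h i j x :=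
          (Finset.sum_range_add_sum_Ico _ (by omega)).symm
        have hIco : ∑ j ∈ Finset.Ico (i+3) (m+1), h i j x ≤ 2^(i+3) * γ := by
          have e2 : ∑ j ∈ Finset.Ico (i+3) (m+1), h i j x
              = ∑ t ∈ Finset.range (m+1-(i+3)), h i (i+3+t) x := by
            rw [Finset.sum_Ico_eq_sum_range]
          rw [e2]
          have hterm : ∀ t, h i (i+3+t) x ≤ 2^(i+3) * H (i+t) x := by
            intro t
            have hmem : i ∈ Finset.range (i+t+1) := by rw [Finset.mem_range]; omega
            have hle : (1/2:ℝ)^(i+3) * h i ((i+t)+3) x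
                ≤ ∑ i' ∈ Finset.range (i+t+1), (1/2:ℝ)^(i'+3) * h i' ((i+t)+3) x :=
              Finset.single_le_sum (f := fun i' => (1/2:ℝ)^(i'+3) * h i' ((i+t)+3) x)
                (fun i' _ => mul_nonneg (by positivity) ((hreg i' ((i+t)+3)).2.1 x hxI)) hmem
            have hPH : ∑ i' ∈ Finset.range (i+t+1), (1/2:ℝ)^(i'+3) * h i' ((i+t)+3) x
                ≤ H (i+t) x := by
              simp only [hH]
              have := hP2nn (i+t) x
              have := hP3nn (i+t) x
              linarith
            have heq3 : i+3+t = (i+t)+3 := by omega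
            rw [heq3]
            have hc2 : (2:ℝ)^(i+3) * ((1/2:ℝ)^(i+3) * h i ((i+t)+3) x) = h i ((i+t)+3) x := by
              rw [← mul_assoc, ← mul_pow]
              norm_num
            calc h i ((i+t)+3) x = (2:ℝ)^(i+3) * ((1/2:ℝ)^(i+3) * h i ((i+t)+3) x) := hc2.symm
              _ ≤ (2:ℝ)^(i+3) * H (i+t) x :=
                  mul_le_mul_of_nonneg_left (hle.trans hPH) (by positivity)
          calc ∑ t ∈ Finset.range (m+1-(i+3)), h i (i+3+t) x
              ≤ ∑ t ∈ Finset.range (m+1-(i+3)), 2^(i+3) * H (i+t) x :=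
                Finset.sum_le_sum (fun t _ => hterm t)
            _ = 2^(i+3) * ∑ t ∈ Finset.range (m+1-(i+3)), H (i+t) x := by rw [Finset.mul_sum]
            _ ≤ 2^(i+3) * γ := mul_le_mul_of_nonneg_left (hHico i _) (by positivity)
        rw [hsplit]
        linarith
    -- the ENNReal control series
    set Q : ℕ → ENNReal := fun i => ENNReal.ofReal (1 - G i (2*i+12) x)
      + ∑' t, ENNReal.ofReal |G i (2*i+12+t+1) x - G i (2*i+12+t) x| with hQ
    have hpsum : ∀ P, ∑ i ∈ Finset.range P, (1 - G i (2*i+12) x) ≤ 32*γ := by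
      intro P
      have hstep : ∑ i ∈ Finset.range (5*P), (1 - G i (2*i+12) x)
          = ∑ m' ∈ Finset.range P, ∑ t ∈ Finset.range 5, (1 - G (5*m'+t) (2*(5*m'+t)+12) x) :=
        sum_range_five_mul (fun i => 1 - G i (2*i+12) x) P
      have h1 : ∑ i ∈ Finset.range P, (1 - G i (2*i+12) x)
          ≤ ∑ i ∈ Finset.range (5*P), (1 - G i (2*i+12) x) :=
        Finset.sum_le_sum_of_subset_of_nonneg (Finset.range_subset_range.2 (by omega))
          (fun i _ _ => by linarith [hG1 i (2*i+12) x])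
      have h2 : ∑ m' ∈ Finset.range P, ∑ t ∈ Finset.range 5, (1 - G (5*m'+t) (2*(5*m'+t)+12) x)
          ≤ ∑ m' ∈ Finset.range P, 32 * H m' x := by
        apply Finset.sum_le_sum
        intro m' _
        have h3 : (1/32) * (∑ t ∈ Finset.range 5, (1 - G (5*m'+t) (2*(5*m'+t)+12) x))
            ≤ H m' x := by
          simp only [hH]
          have := hP1nn m' x hxI
          have := hP2nn m' x
          linarith
        linarith
      have h4 : ∑ m' ∈ Finset.range P, 32 * H m' x = 32 * ∑ m' ∈ Finset.range P, H m' x := by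
        rw [Finset.mul_sum]
      have h5 := hγ' P
      rw [h4] at h2
      rw [hstep] at h1
      linarith
    have husum : ∀ i T, ∑ t ∈ Finset.range T, |G i (2*i+12+t+1) x - G i (2*i+12+t) x|
        ≤ 32*γ := by
      intro i T
      have hterm : ∀ t, |G i (2*i+12+t+1) x - G i (2*i+12+t) x| ≤ 32 * H (i+t) x := by
        intro t
        have hmem : i ∈ Finset.range (i+t+1) := by rw [Finset.mem_range]; omega
        have hle : |G i ((i+t)+i+12+1) x - G i ((i+t)+i+12) x|
            ≤ ∑ i' ∈ Finset.range (i+t+1), |G i' ((i+t)+i'+12+1) x - G i' ((i+t)+i'+12) x| :=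
          Finset.single_le_sum
            (f := fun i' => |G i' ((i+t)+i'+12+1) x - G i' ((i+t)+i'+12) x|)
            (fun i' _ => abs_nonneg _) hmem
        have hPH : (1/32) * ∑ i' ∈ Finset.range (i+t+1),
            |G i' ((i+t)+i'+12+1) x - G i' ((i+t)+i'+12) x| ≤ H (i+t) x := by
          simp only [hH]
          have := hP1nn (i+t) x hxI
          have := hP3nn (i+t) x
          linarith
        have heq : 2*i+12+t = (i+t)+i+12 := by omega
        rw [heq]
        linarith
      calc ∑ t ∈ Finset.range T, |G i (2*i+12+t+1) x - G i (2*i+12+t) x|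
          ≤ ∑ t ∈ Finset.range T, 32 * H (i+t) x := Finset.sum_le_sum (fun t _ => hterm t)
        _ = 32 * ∑ t ∈ Finset.range T, H (i+t) x := by rw [Finset.mul_sum]
        _ ≤ 32*γ := by
            have := hHico i T
            linarith
    have hQp : ∑' i, ENNReal.ofReal (1 - G i (2*i+12) x) ≤ ENNReal.ofReal (32*γ) :=
      tsum_ofReal_le (fun i => by linarith [hG1 i (2*i+12) x]) hpsum
    have hQu : ∑' i, (∑' t, ENNReal.ofReal |G i (2*i+12+t+1) x - G i (2*i+12+t) x|)
        ≤ ENNReal.ofReal (32*γ) := by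
      set g' : ℕ × ℕ → ENNReal := fun q =>
        if q.2 ≤ q.1 then ENNReal.ofReal |G q.2 (q.1+q.2+12+1) x - G q.2 (q.1+q.2+12) x|
        else 0 with hg'
      have hstep1 : ∀ i t : ℕ,
          ENNReal.ofReal |G i (2*i+12+t+1) x - G i (2*i+12+t) x| = g' (i+t, i) := by
        intro i t
        have heq : 2*i+12+t = (i+t)+i+12 := by omega
        rw [heq]
        simp only [hg']
        rw [if_pos (by omega : i ≤ i+t)]
      calc ∑' (i : ℕ), ∑' (t : ℕ), ENNReal.ofReal |G i (2*i+12+t+1) x - G i (2*i+12+t) x|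
          = ∑' (q : ℕ × ℕ), ENNReal.ofReal |G q.1 (2*q.1+12+q.2+1) x - G q.1 (2*q.1+12+q.2) x| :=
            ENNReal.tsum_prod.symm
        _ = ∑' (q : ℕ × ℕ), g' (q.1+q.2, q.1) := by
            apply tsum_congr
            rintro ⟨i, t⟩
            exact hstep1 i t
        _ ≤ ∑' (q : ℕ × ℕ), g' q := by
            apply ENNReal.tsum_comp_le_tsum_of_injective
            rintro ⟨a, b⟩ ⟨c, d⟩ hq
            simp only [Prod.mk.injEq] at hq
            simp only [Prod.mk.injEq]
            omega
        _ = ∑' (m' : ℕ), ∑' (i : ℕ), g' (m', i) := ENNReal.tsum_prod'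
        _ = ∑' (m' : ℕ), ENNReal.ofReal
            (∑ i ∈ Finset.range (m'+1), |G i (m'+i+12+1) x - G i (m'+i+12) x|) := by
            apply tsum_congr
            intro m'
            rw [tsum_eq_sum (s := Finset.range (m'+1))
              (fun i hi => by
                simp only [hg']
                rw [if_neg (by rw [Finset.mem_range] at hi; omega)])]
            rw [ENNReal.ofReal_sum_of_nonneg (fun i _ => abs_nonneg _)]
            apply Finset.sum_congr rfl
            intro i hi
            rw [Finset.mem_range] at hi
            simp only [hg']
            rw [if_pos (by omega : i ≤ m')]
        _ ≤ ENNReal.ofReal (32*γ) := by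
            apply tsum_ofReal_le (fun m' => Finset.sum_nonneg fun i _ => abs_nonneg _)
            intro M
            have hstep2 : ∀ m', ∑ i ∈ Finset.range (m'+1),
                |G i (m'+i+12+1) x - G i (m'+i+12) x| ≤ 32 * H m' x := by
              intro m'
              have h3 : (1/32) * ∑ i ∈ Finset.range (m'+1),
                  |G i (m'+i+12+1) x - G i (m'+i+12) x| ≤ H m' x := by
                simp only [hH]
                have := hP1nn m' x hxI
                have := hP3nn m' x
                linarith
              linarith
            calc ∑ m' ∈ Finset.range M, ∑ i ∈ Finset.range (m'+1),
                  |G i (m'+i+12+1) x - G i (m'+i+12) x|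
                ≤ ∑ m' ∈ Finset.range M, 32 * H m' x :=
                  Finset.sum_le_sum fun m' _ => hstep2 m'
              _ = 32 * ∑ m' ∈ Finset.range M, H m' x := by rw [Finset.mul_sum]
              _ ≤ 32*γ := by
                  have := hγ' M
                  linarith
    have hQne : ∑' i, Q i ≠ ⊤ := by
      have hle : ∑' i, Q i ≤ ENNReal.ofReal (32*γ) + ENNReal.ofReal (32*γ) := by
        simp only [hQ]
        rw [ENNReal.tsum_add]
        exact add_le_add hQp hQu
      exact ne_top_of_le_ne_top
        (ENNReal.add_ne_top.2 ⟨ENNReal.ofReal_ne_top, ENNReal.ofReal_ne_top⟩) hle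
    have hQtail : Tendsto (fun i0 => ∑' i, Q (i + i0)) atTop (nhds 0) :=
      ENNReal.tendsto_sum_nat_add Q hQne
    have hQb : ∀ i m : ℕ, ENNReal.ofReal (1 - G i (2*m+2*i+12) x) ≤ Q i := by
      intro i m
      have h1 : 1 - G i (2*m+2*i+12) x ≤ (1 - G i (2*i+12) x)
          + ∑ j ∈ Finset.Ico (2*i+12) (2*m+2*i+12), |G i (j+1) x - G i j x| := by
        have h2 := abs_sub_le_sum_Ico (fun j => G i j x) (2*i+12) (2*m+2*i+12) (by omega)
        have h3 : G i (2*i+12) x - G i (2*m+2*i+12) x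
            ≤ |G i (2*m+2*i+12) x - G i (2*i+12) x| := by
          rw [abs_sub_comm]
          exact le_abs_self _
        linarith
      calc ENNReal.ofReal (1 - G i (2*m+2*i+12) x)
          ≤ ENNReal.ofReal ((1 - G i (2*i+12) x)
            + ∑ j ∈ Finset.Ico (2*i+12) (2*m+2*i+12), |G i (j+1) x - G i j x|) :=
            ENNReal.ofReal_le_ofReal h1
        _ ≤ ENNReal.ofReal (1 - G i (2*i+12) x)
            + ENNReal.ofReal
              (∑ j ∈ Finset.Ico (2*i+12) (2*m+2*i+12), |G i (j+1) x - G i j x|) :=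
            ENNReal.ofReal_add_le
        _ ≤ Q i := by
            simp only [hQ]
            apply add_le_add le_rfl
            rw [ENNReal.ofReal_sum_of_nonneg (fun j _ => abs_nonneg _),
              Finset.sum_Ico_eq_sum_range]
            exact ENNReal.sum_le_tsum _
    by_cases hxZ : x ∈ Z
    · have hindZ : Set.indicator Z (fun _ => (1:ℝ)) x = 1 := Set.indicator_of_mem hxZ _
      rw [hindZ]
      have hxX : ∀ i : ℕ, x ∈ X (n+i) := by
        intro i
        have h6 := hxZ
        rw [hZ] at h6
        exact Set.mem_iInter.1 (Set.mem_iInter.1 h6 (n+i)) (Nat.le_add_right n i)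
      have hGti : ∀ i : ℕ, Tendsto (fun m => G i (2*m+2*i+12) x) atTop (nhds 1) := by
        intro i
        have hbase := hGt i x (hΩi i)
        rw [Set.indicator_of_mem (hxX i)] at hbase
        have harr : Tendsto (fun m : ℕ => 2*m+2*i+12) atTop atTop :=
          tendsto_atTop_mono (fun m => by omega : ∀ m : ℕ, m ≤ 2*m+2*i+12) tendsto_id
        exact hbase.comp harr
      rw [Metric.tendsto_atTop]
      intro ε hε
      have hofreal : (0:ENNReal) < ENNReal.ofReal (ε/2) := ENNReal.ofReal_pos.2 (by linarith)
      obtain ⟨i0, hi0⟩ := (hQtail.eventually_lt_const hofreal).exists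
      set δ := ε/(2*(i0+1)) with hδ
      have hδpos : 0 < δ := by rw [hδ]; positivity
      have hev1 : ∀ᶠ m : ℕ in atTop, ∀ i ∈ Finset.range i0, 1 - G i (2*m+2*i+12) x < δ := by
        rw [Filter.eventually_all_finset]
        intro i _
        have h7 := (hGti i).eventually_const_lt (by linarith : 1 - δ < 1)
        filter_upwards [h7] with m hm
        linarith
      have hev2 : ∀ᶠ m : ℕ in atTop, i0 ≤ m := Filter.eventually_ge_atTop i0
      obtain ⟨N, hN⟩ := Filter.eventually_atTop.1 (hev1.and hev2)
      refine ⟨N, fun m hm => ?_⟩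
      obtain ⟨hm1, hm2⟩ := hN m hm
      have hi0le : i0 ≤ 5*m+21 := by omega
      have hlb : 1 - (∑ i ∈ Finset.range (5*m+21), (1 - G i (2*m+2*i+12) x)) ≤ Fs m x := by
        simp only [hFs]
        exact one_sub_sum_le_prod _ _ (fun i => hG0 _ _ _) (fun i => hG1 _ _ _)
      have hsplit2 : ∑ i ∈ Finset.range (5*m+21), (1 - G i (2*m+2*i+12) x)
          = (∑ i ∈ Finset.range i0, (1 - G i (2*m+2*i+12) x))
            + ∑ i ∈ Finset.Ico i0 (5*m+21), (1 - G i (2*m+2*i+12) x) :=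
        (Finset.sum_range_add_sum_Ico _ hi0le).symm
      have hs1 : ∑ i ∈ Finset.range i0, (1 - G i (2*m+2*i+12) x) ≤ i0 * δ := by
        calc ∑ i ∈ Finset.range i0, (1 - G i (2*m+2*i+12) x)
            ≤ ∑ _i ∈ Finset.range i0, δ := Finset.sum_le_sum (fun i hi => (hm1 i hi).le)
          _ = i0 * δ := by rw [Finset.sum_const, Finset.card_range, nsmul_eq_mul]
      have h9 : (0:ℝ) < (i0:ℝ)+1 := by positivity
      have hs1b : (i0:ℝ) * δ < ε/2 := by
        have h10 : (i0:ℝ) * δ = ε/2 * ((i0:ℝ)/((i0:ℝ)+1)) := by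
          rw [hδ]
          field_simp
        have h11 : (i0:ℝ)/((i0:ℝ)+1) < 1 := by
          rw [div_lt_one h9]
          linarith
        have h12 : (0:ℝ) ≤ (i0:ℝ)/((i0:ℝ)+1) := by positivity
        rw [h10]
        nlinarith
      have hs2 : ∑ i ∈ Finset.Ico i0 (5*m+21), (1 - G i (2*m+2*i+12) x) < ε/2 := by
        have hofnn : ∀ i ∈ Finset.Ico i0 (5*m+21), (0:ℝ) ≤ 1 - G i (2*m+2*i+12) x :=
          fun i _ => by linarith [hG1 i (2*m+2*i+12) x]
        have hlt : ENNReal.ofReal (∑ i ∈ Finset.Ico i0 (5*m+21), (1 - G i (2*m+2*i+12) x))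
            < ENNReal.ofReal (ε/2) := by
          rw [ENNReal.ofReal_sum_of_nonneg hofnn]
          calc ∑ i ∈ Finset.Ico i0 (5*m+21), ENNReal.ofReal (1 - G i (2*m+2*i+12) x)
              ≤ ∑ i ∈ Finset.Ico i0 (5*m+21), Q i :=
                Finset.sum_le_sum (fun i _ => hQb i m)
            _ ≤ ∑' t, Q (t + i0) := by
                rw [Finset.sum_Ico_eq_sum_range]
                rw [Finset.sum_congr rfl (fun t _ => by rw [Nat.add_comm i0 t])]
                exact ENNReal.sum_le_tsum _
            _ < ENNReal.ofReal (ε/2) := hi0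
        exact (ENNReal.ofReal_lt_ofReal_iff (by linarith)).1 hlt
      have hds : dist (Fs m x) 1 = 1 - Fs m x := by
        rw [Real.dist_eq, abs_of_nonpos (by linarith [hFs1 m x])]
        ring
      rw [hds]
      rw [hsplit2] at hlb
      linarith
    · have hindZ : Set.indicator Z (fun _ => (1:ℝ)) x = 0 := Set.indicator_of_notMem hxZ _
      rw [hindZ]
      have hex : ∃ k, n ≤ k ∧ x ∉ X k := by
        by_contra hcon
        push_neg at hcon
        apply hxZ
        rw [hZ]
        exact Set.mem_iInter.2 fun k => Set.mem_iInter.2 fun hk => hcon k hk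
      obtain ⟨k, hk, hxk⟩ := hex
      set i := k - n with hi
      have hbase := hGt i x (hΩi i)
      have hind2 : (X (n+i)).indicator (fun _ => (1:ℝ)) x = 0 := by
        have hni : n + i = k := by rw [hi]; omega
        rw [hni]
        exact Set.indicator_of_notMem hxk _
      rw [hind2] at hbase
      have harr : Tendsto (fun m : ℕ => 2*m+2*i+12) atTop atTop :=
        tendsto_atTop_mono (fun m => by omega : ∀ m : ℕ, m ≤ 2*m+2*i+12) tendsto_id
      have hG00 : Tendsto (fun m => G i (2*m+2*i+12) x) atTop (nhds 0) := hbase.comp harr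
      apply squeeze_zero_norm' ?_ hG00
      filter_upwards [Filter.eventually_ge_atTop i] with m hm
      have hmem : i ∈ Finset.range (5*m+21) := by rw [Finset.mem_range]; omega
      have hprod : Fs m x ≤ G i (2*m+2*i+12) x := by
        simp only [hFs]
        rw [← Finset.mul_prod_erase _ _ hmem]
        apply mul_le_of_le_one_right (hG0 _ _ _)
        exact Finset.prod_le_one (fun i' _ => hG0 _ _ _) (fun i' _ => hG1 _ _ _)
      rw [Real.norm_eq_abs, abs_of_nonneg (hFs0 m x)]
      exact hprod
  refine ⟨ν, ⟨Omega H, Fs, ⟨H, hHreg, Set.Subset.rfl⟩, fun x hx => hx.1, hFsc, hFsd,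
    hconv, hν⟩, ?_⟩
  have := hμ n le_rfl
  linarith
end
end

section
/- Let D ⊆ [0,1] be almost full and let f : D → ℝ be tag-Riemann integrable with some integral A. Then the associated step functions form a Cauchy net in the L¹ sense: for every ε > 0 there exists M ∈ ℕ such that for all m′, m″ ≥ M and all tag systems ζ′ of depth m′ and ζ″ of depth m″ for D, one has ∫₀¹ |S(ζ′)(x) − S(ζ″)(x)| dx < ε. -/
/-!
Tagging each dyadic interval of depth `m` at whichever of two given tags carries the larger
(resp. smaller) value of `f` produces two tag systems whose Riemann sums differ by exactly
`∑ₗ 2⁻ᵐ |f(ζₗ) - f(ξₗ)|`; so tag-Riemann integrability makes this discrete `L¹` distance small.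
For depths `m ≤ m + k` the `L¹` distance of the step functions is the average, over the
position `j < 2ᵏ` of a subinterval inside its parent, of such same-depth distances between `ζ'`
and the depth-`m` tag system formed by the `j`-th subinterval tags of `ζ''`.
-/

open MeasureTheory Filter Set

noncomputable section

/-- A *tag system of depth `m` for `D`*: a choice of a point of `I_{l,m} ∩ D` for each
dyadic interval `I_{l,m} = (l·2⁻ᵐ, (l+1)·2⁻ᵐ)`, `0 ≤ l < 2ᵐ`. -/
def IsTagSystem (D : Set ℝ) (m : ℕ) (ζ : ℕ → ℝ) : Prop :=
  ∀ l : ℕ, l < 2^m → ζ l ∈ Set.Ioo ((l : ℝ) / 2^m) (((l : ℝ) + 1) / 2^m) ∩ D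

/-- The Riemann sum of `f` associated with a tag system of depth `m`. -/
def RiemannSum (f : ℝ → ℝ) (m : ℕ) (ζ : ℕ → ℝ) : ℝ :=
  ∑ l ∈ Finset.range (2^m), (1/2 : ℝ)^m * f (ζ l)

/-- `f : D → ℝ` is *tag-Riemann integrable with integral `A`* if the Riemann sums over
all tag systems of sufficiently large depth are arbitrarily close to `A`. -/
def TagRiemannIntegrable (D : Set ℝ) (f : ℝ → ℝ) (A : ℝ) : Prop :=
  ∀ ε > (0:ℝ), ∃ M : ℕ, ∀ m ≥ M, ∀ ζ : ℕ → ℝ, IsTagSystem D m ζ →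
    |RiemannSum f m ζ - A| < ε

/-- The step function associated with a tag system of depth `m`. -/
def StepFun (f : ℝ → ℝ) (m : ℕ) (ζ : ℕ → ℝ) : ℝ → ℝ :=
  fun x => ∑ l ∈ Finset.range (2^m),
    Set.indicator (Set.Ioo ((l : ℝ) / 2^m) (((l : ℝ) + 1) / 2^m)) (fun _ => f (ζ l)) x

def dyadicIoo (m l : ℕ) : Set ℝ := Ioo ((l : ℝ) / 2 ^ m) (((l : ℝ) + 1) / 2 ^ m)

theorem dyadicIoo_disjoint {m l l' : ℕ} (h : l ≠ l') :
    Disjoint (dyadicIoo m l) (dyadicIoo m l') := by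
  wlog hlt : l < l' generalizing l l'
  · exact (this h.symm (lt_of_le_of_ne (not_lt.1 hlt) h.symm)).symm
  refine disjoint_left.2 fun x hx hx' => ?_
  have hle : ((l : ℝ) + 1) / 2 ^ m ≤ l' / 2 ^ m := by gcongr; exact_mod_cast hlt
  exact (hx.2.trans_le hle).not_gt hx'.1

theorem dyadicIoo_subset_div (m k l : ℕ) : dyadicIoo (m + k) l ⊆ dyadicIoo m (l / 2 ^ k) := by
  have hlo : ((l / 2 ^ k : ℕ) : ℝ) * 2 ^ k ≤ l := by
    exact_mod_cast Nat.div_mul_le_self l (2 ^ k)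
  have hhi : (l : ℝ) + 1 ≤ (((l / 2 ^ k : ℕ) : ℝ) + 1) * 2 ^ k := by
    have h := Nat.lt_div_mul_add (a := l) (Nat.two_pow_pos k)
    rw [← Nat.succ_mul] at h
    exact_mod_cast h
  have hm : (0 : ℝ) < 2 ^ m := by positivity
  have hk : (0 : ℝ) < 2 ^ k := by positivity
  apply Ioo_subset_Ioo
  · rw [div_le_div_iff₀ hm (by positivity), pow_add]; nlinarith
  · rw [div_le_div_iff₀ (by positivity) hm, pow_add]; nlinarith

theorem stepFun_eq_of_mem (f : ℝ → ℝ) (ζ : ℕ → ℝ) {m l : ℕ} (hl : l < 2 ^ m) {x : ℝ}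
    (hx : x ∈ dyadicIoo m l) : StepFun f m ζ x = f (ζ l) := by
  change ∑ l' ∈ Finset.range (2 ^ m), (dyadicIoo m l').indicator (fun _ => f (ζ l')) x = _
  rw [Finset.sum_eq_single_of_mem l (Finset.mem_range.2 hl) fun l' _ hne =>
    indicator_of_notMem ((dyadicIoo_disjoint hne).notMem_of_mem_right hx) _]
  exact indicator_of_mem hx _

theorem intervalIntegrable_of_eqOn_Ioo {g : ℝ → ℝ} {a b C : ℝ} (hab : a ≤ b)
    (hg : EqOn g (fun _ => C) (Ioo a b)) : IntervalIntegrable g volume a b :=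
  (intervalIntegrable_iff_integrableOn_Ioo_of_le hab).2
    ((integrableOn_const measure_Ioo_lt_top.ne).congr_fun hg.symm measurableSet_Ioo)

theorem intervalIntegral_eq_of_eqOn_Ioo {g : ℝ → ℝ} {a b C : ℝ} (hab : a ≤ b)
    (hg : EqOn g (fun _ => C) (Ioo a b)) : ∫ x in a..b, g x = (b - a) * C := by
  rw [intervalIntegral.integral_of_le hab, integral_Ioc_eq_integral_Ioo,
    setIntegral_congr_fun measurableSet_Ioo hg, setIntegral_const,
    Real.volume_real_Ioo_of_le hab, smul_eq_mul]

theorem intervalIntegral_eq_sum_of_eqOn_dyadicIoo {g : ℝ → ℝ} {m : ℕ} {c : ℕ → ℝ}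
    (hg : ∀ l < 2 ^ m, EqOn g (fun _ => c l) (dyadicIoo m l)) :
    ∫ x in (0 : ℝ)..1, g x = ∑ l ∈ Finset.range (2 ^ m), (1 / 2 : ℝ) ^ m * c l := by
  set a : ℕ → ℝ := fun l => (l : ℝ) / 2 ^ m
  have hlen : ∀ l, a (l + 1) - a l = (1 / 2 : ℝ) ^ m := fun l => by
    simp only [a, one_div, inv_pow]; push_cast; field_simp; ring
  have hle : ∀ l, a l ≤ a (l + 1) := fun l => sub_nonneg.1 (hlen l ▸ by positivity)
  have hIoo : ∀ l, Ioo (a l) (a (l + 1)) = dyadicIoo m l := fun l => by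
    simp only [a, dyadicIoo]; push_cast; rfl
  have h0 : a 0 = 0 := by simp [a]
  have h1 : a (2 ^ m) = 1 := by simp [a]
  have hsum := intervalIntegral.sum_integral_adjacent_intervals fun l hl =>
    intervalIntegrable_of_eqOn_Ioo (hle l) (hIoo l ▸ hg l hl)
  rw [h0, h1] at hsum
  rw [← hsum]
  refine Finset.sum_congr rfl fun l hl => ?_
  rw [intervalIntegral_eq_of_eqOn_Ioo (hle l) (hIoo l ▸ hg l (Finset.mem_range.1 hl)), hlen]

theorem mul_add_div_eq_of_lt (i : ℕ) {b j : ℕ} (hj : j < b) : (i * b + j) / b = i := by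
  rw [Nat.mul_comm, Nat.mul_add_div (Nat.zero_le j |>.trans_lt hj), Nat.div_eq_of_lt hj,
    Nat.add_zero]

theorem IsTagSystem.ite {D : Set ℝ} {m : ℕ} {ζ ξ : ℕ → ℝ} (hζ : IsTagSystem D m ζ)
    (hξ : IsTagSystem D m ξ) (p : ℕ → Prop) [DecidablePred p] :
    IsTagSystem D m (fun l => if p l then ζ l else ξ l) := fun l hl => by
  dsimp only
  split_ifs
  exacts [hζ l hl, hξ l hl]

theorem IsTagSystem.coarsen {D : Set ℝ} {m k : ℕ} {ζ : ℕ → ℝ} (hζ : IsTagSystem D (m + k) ζ)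
    {j : ℕ} (hj : j < 2 ^ k) : IsTagSystem D m (fun i => ζ (i * 2 ^ k + j)) := fun i hi => by
  have hlt : i * 2 ^ k + j < 2 ^ (m + k) := by
    rw [pow_add]; nlinarith
  obtain ⟨hmem, hD⟩ := hζ _ hlt
  refine ⟨?_, hD⟩
  have hsub := dyadicIoo_subset_div m k _ hmem
  rwa [mul_add_div_eq_of_lt i hj] at hsub

theorem sum_range_mul_eq_sum_sum (a b : ℕ) (t : ℕ → ℝ) :
    ∑ l ∈ Finset.range (a * b), t l =
      ∑ i ∈ Finset.range a, ∑ j ∈ Finset.range b, t (i * b + j) := by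
  induction a with
  | zero => simp
  | succ n ih => rw [Nat.succ_mul, Finset.sum_range_add, ih, Finset.sum_range_succ]

theorem sum_abs_sub_lt_of_riemannSum_near {D : Set ℝ} {f : ℝ → ℝ} {A ε : ℝ} {m : ℕ}
    (hA : ∀ ζ, IsTagSystem D m ζ → |RiemannSum f m ζ - A| < ε) {ζ ξ : ℕ → ℝ}
    (hζ : IsTagSystem D m ζ) (hξ : IsTagSystem D m ξ) :
    ∑ l ∈ Finset.range (2 ^ m), (1 / 2 : ℝ) ^ m * |f (ζ l) - f (ξ l)| < 2 * ε := by
  classical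
  set p : ℕ → Prop := fun l => f (ξ l) ≤ f (ζ l)
  have hsum : ∑ l ∈ Finset.range (2 ^ m), (1 / 2 : ℝ) ^ m * |f (ζ l) - f (ξ l)|
      = RiemannSum f m (fun l => if p l then ζ l else ξ l)
        - RiemannSum f m (fun l => if p l then ξ l else ζ l) := by
    rw [RiemannSum, RiemannSum, ← Finset.sum_sub_distrib]
    refine Finset.sum_congr rfl fun l _ => ?_
    by_cases hp : p l
    · rw [if_pos hp, if_pos hp, abs_of_nonneg (sub_nonneg.2 hp), mul_sub]
    · rw [if_neg hp, if_neg hp, abs_of_neg (sub_neg.2 (not_le.1 hp)), neg_sub, mul_sub]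
  have h₁ := abs_lt.1 (hA _ (hζ.ite hξ p))
  have h₂ := abs_lt.1 (hA _ (hξ.ite hζ p))
  rw [hsum]
  linarith [h₁.1, h₁.2, h₂.1, h₂.2]

theorem integral_abs_stepFun_sub_lt {D : Set ℝ} {f : ℝ → ℝ} {A ε : ℝ} {m k : ℕ}
    (hA : ∀ ζ, IsTagSystem D m ζ → |RiemannSum f m ζ - A| < ε) {ζ' ζ'' : ℕ → ℝ}
    (hζ' : IsTagSystem D m ζ') (hζ'' : IsTagSystem D (m + k) ζ'') :
    ∫ x in (0 : ℝ)..1, |StepFun f m ζ' x - StepFun f (m + k) ζ'' x| < 2 * ε := by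
  have hfiber : ∀ j < 2 ^ k, ∑ i ∈ Finset.range (2 ^ m),
      (1 / 2 : ℝ) ^ m * |f (ζ' i) - f (ζ'' (i * 2 ^ k + j))| < 2 * ε := fun j hj =>
    sum_abs_sub_lt_of_riemannSum_near hA hζ' (hζ''.coarsen hj)
  have hdiv : ∀ l < 2 ^ (m + k), l / 2 ^ k < 2 ^ m := fun l hl =>
    Nat.div_lt_of_lt_mul (by rwa [← pow_add, add_comm])
  calc ∫ x in (0 : ℝ)..1, |StepFun f m ζ' x - StepFun f (m + k) ζ'' x|
      = ∑ l ∈ Finset.range (2 ^ (m + k)),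
          (1 / 2 : ℝ) ^ (m + k) * |f (ζ' (l / 2 ^ k)) - f (ζ'' l)| :=
        intervalIntegral_eq_sum_of_eqOn_dyadicIoo fun l hl x hx => by
          simp only [stepFun_eq_of_mem f ζ'' hl hx,
            stepFun_eq_of_mem f ζ' (hdiv l hl) (dyadicIoo_subset_div m k l hx)]
    _ = ∑ j ∈ Finset.range (2 ^ k), (1 / 2 : ℝ) ^ k * ∑ i ∈ Finset.range (2 ^ m),
          (1 / 2 : ℝ) ^ m * |f (ζ' i) - f (ζ'' (i * 2 ^ k + j))| := by
        rw [pow_add, sum_range_mul_eq_sum_sum, Finset.sum_comm]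
        refine Finset.sum_congr rfl fun j hj => ?_
        rw [Finset.mul_sum]
        refine Finset.sum_congr rfl fun i _ => ?_
        rw [mul_add_div_eq_of_lt i (Finset.mem_range.1 hj)]
        ring
    _ < ∑ j ∈ Finset.range (2 ^ k), (1 / 2 : ℝ) ^ k * (2 * ε) :=
        Finset.sum_lt_sum_of_nonempty (by simp) fun j hj =>
          mul_lt_mul_of_pos_left (hfiber j (Finset.mem_range.1 hj)) (by positivity)
    _ = 2 * ε := by
        have hcancel : ((2 ^ k : ℕ) : ℝ) * (1 / 2) ^ k = 1 := by
          push_cast; rw [← mul_pow]; norm_num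
        rw [Finset.sum_const, Finset.card_range, nsmul_eq_mul, ← mul_assoc, hcancel, one_mul]

theorem stmt16_general (D : Set ℝ) (f : ℝ → ℝ) (A : ℝ) (hf : TagRiemannIntegrable D f A) :
    ∀ ε > (0:ℝ), ∃ M : ℕ, ∀ m' ≥ M, ∀ m'' ≥ M, ∀ ζ' ζ'' : ℕ → ℝ,
      IsTagSystem D m' ζ' → IsTagSystem D m'' ζ'' →
      (∫ x in (0:ℝ)..1, |StepFun f m' ζ' x - StepFun f m'' ζ'' x|) < ε := by
  intro ε hε
  obtain ⟨M, hM⟩ := hf (ε / 2) (half_pos hε)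
  refine ⟨M, fun m' hm' m'' hm'' ζ' ζ'' hζ' hζ'' => ?_⟩
  wlog hle : m' ≤ m'' generalizing m' m'' ζ' ζ''
  · simpa only [abs_sub_comm] using this m'' hm'' m' hm' ζ'' ζ' hζ'' hζ' (le_of_not_ge hle)
  obtain ⟨k, rfl⟩ := Nat.exists_eq_add_of_le hle
  linarith [integral_abs_stepFun_sub_lt (hM m' hm') hζ' hζ'']

/-- If `D ⊆ [0,1]` is almost full and `f : D → ℝ` is tag-Riemann integrable, then the
associated step functions form a Cauchy net in the `L¹` sense. -/
theorem stmt16 (D : Set ℝ) (hD : D ⊆ Set.Icc 0 1) (hfull : AlmostFull D)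
    (f : ℝ → ℝ) (A : ℝ) (hf : TagRiemannIntegrable D f A) :
    ∀ ε > (0:ℝ), ∃ M : ℕ, ∀ m' ≥ M, ∀ m'' ≥ M, ∀ ζ' ζ'' : ℕ → ℝ,
      IsTagSystem D m' ζ' → IsTagSystem D m'' ζ'' →
      (∫ x in (0:ℝ)..1, |StepFun f m' ζ' x - StepFun f m'' ζ'' x|) < ε :=
  stmt16_general D f A hf
end
end

section
/- (Main theorem.) Let D ⊆ [0,1] be almost full and let f : D → ℝ be tag-Riemann integrable with integral A. Then f is summable with integral A; that is, there exist an almost full set Y ⊆ D and a sequence (f_n) of continuous functions on [0,1] with ∫₀¹ |f_{n+1} − f_n| < 2^{-n} for all n such that f_n(x) → f(x) for every x ∈ Y and ∫₀¹ f_n → A. -/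
open MeasureTheory Filter Set

noncomputable section

namespace S17
set_option linter.unusedSectionVars false

/-- trapezoidal bump -/
def trap (u v δ x : ℝ) : ℝ := max 0 (min 1 (min ((x - u)/δ) ((v - x)/δ)))

lemma trap_nonneg (u v δ x : ℝ) : 0 ≤ trap u v δ x := le_max_left _ _

lemma trap_le_one (u v δ x : ℝ) : trap u v δ x ≤ 1 :=
  max_le zero_le_one (min_le_left _ _)

lemma continuous_trap (u v δ : ℝ) : Continuous (fun x => trap u v δ x) := by
  unfold trap; fun_prop

lemma trap_eq_zero_left (u v δ x : ℝ) (hδ : 0 < δ) (h : x ≤ u) : trap u v δ x = 0 := by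
  have h1 : (x - u)/δ ≤ 0 := div_nonpos_iff.2 (Or.inr ⟨by linarith, hδ.le⟩)
  have h2 : min 1 (min ((x - u)/δ) ((v - x)/δ)) ≤ 0 :=
    le_trans (min_le_right _ _) (le_trans (min_le_left _ _) h1)
  exact max_eq_left h2

lemma trap_eq_zero_right (u v δ x : ℝ) (hδ : 0 < δ) (h : v ≤ x) : trap u v δ x = 0 := by
  have h1 : (v - x)/δ ≤ 0 := div_nonpos_iff.2 (Or.inr ⟨by linarith, hδ.le⟩)
  have h2 : min 1 (min ((x - u)/δ) ((v - x)/δ)) ≤ 0 :=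
    le_trans (min_le_right _ _) (le_trans (min_le_right _ _) h1)
  exact max_eq_left h2

lemma trap_eq_one (u v δ x : ℝ) (hδ : 0 < δ) (h1 : u + δ ≤ x) (h2 : x ≤ v - δ) :
    trap u v δ x = 1 := by
  have e1 : (1:ℝ) ≤ (x - u)/δ := (le_div_iff₀ hδ).2 (by linarith)
  have e2 : (1:ℝ) ≤ (v - x)/δ := (le_div_iff₀ hδ).2 (by linarith)
  unfold trap
  rw [min_eq_left (le_min e1 e2)]
  exact max_eq_right zero_le_one

lemma mem_Ioo_of_trap_ne_zero (u v δ x : ℝ) (hδ : 0 < δ) (h : trap u v δ x ≠ 0) :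
    x ∈ Set.Ioo u v := by
  constructor
  · by_contra hc; exact h (trap_eq_zero_left u v δ x hδ (by linarith [not_lt.1 hc]))
  · by_contra hc; exact h (trap_eq_zero_right u v δ x hδ (by linarith [not_lt.1 hc]))

/-- integral upper bound for functions supported in [u,v] ⊆ [-1,2], bounded by 1 -/
lemma integral_le_of_support (φ : ℝ → ℝ) (hc : Continuous φ) (h0 : ∀ x, 0 ≤ φ x)
    (h1 : ∀ x, φ x ≤ 1) (u v : ℝ) (huv : u ≤ v) (hu : -1 ≤ u) (hv : v ≤ 2)
    (hz : ∀ x, x ∉ Set.Ioo u v → φ x = 0) :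
    (∫ x in (0:ℝ)..1, φ x) ≤ v - u := by
  have hint : ∀ a b : ℝ, IntervalIntegrable φ volume a b := fun a b => hc.intervalIntegrable a b
  have key : (∫ x in (0:ℝ)..1, φ x) ≤ ∫ x in (-1:ℝ)..2, φ x := by
    rw [← intervalIntegral.integral_add_adjacent_intervals (hint (-1) 0) (hint 0 2),
        ← intervalIntegral.integral_add_adjacent_intervals (hint 0 1) (hint 1 2)]
    have p1 : 0 ≤ ∫ x in (-1:ℝ)..0, φ x :=
      intervalIntegral.integral_nonneg (by norm_num) (fun x _ => h0 x)
    have p2 : 0 ≤ ∫ x in (1:ℝ)..2, φ x :=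
      intervalIntegral.integral_nonneg (by norm_num) (fun x _ => h0 x)
    linarith
  have split : (∫ x in (-1:ℝ)..2, φ x) = (∫ x in (-1:ℝ)..u, φ x) + (∫ x in u..v, φ x)
      + (∫ x in v..(2:ℝ), φ x) := by
    rw [intervalIntegral.integral_add_adjacent_intervals (hint (-1) u) (hint u v),
        intervalIntegral.integral_add_adjacent_intervals (hint (-1) v) (hint v 2)]
  have z1 : (∫ x in (-1:ℝ)..u, φ x) = 0 := by
    rw [intervalIntegral.integral_congr (g := fun _ => (0:ℝ))]
    · simp
    · intro x hx
      rw [Set.uIcc_of_le hu] at hx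
      exact hz x (fun hm => absurd hm.1 (not_lt.2 hx.2))
  have z2 : (∫ x in v..(2:ℝ), φ x) = 0 := by
    rw [intervalIntegral.integral_congr (g := fun _ => (0:ℝ))]
    · simp
    · intro x hx
      rw [Set.uIcc_of_le hv] at hx
      exact hz x (fun hm => absurd hm.2 (not_lt.2 hx.1))
  have zb : (∫ x in u..v, φ x) ≤ v - u := by
    calc (∫ x in u..v, φ x) ≤ ∫ _x in u..v, (1:ℝ) :=
          intervalIntegral.integral_mono_on huv (hint u v)
            (intervalIntegrable_const) (fun x _ => h1 x)
      _ = v - u := by simp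
  linarith [key, split ▸ (by linarith [zb] : (∫ x in (-1:ℝ)..u, φ x) + (∫ x in u..v, φ x) + (∫ x in v..(2:ℝ), φ x) ≤ 0 + (v-u) + 0 )]

/-- integral lower bound: φ ≥ 0, φ = 1 on [p,q] ⊆ [0,1] -/
lemma integral_ge_of_one (φ : ℝ → ℝ) (hc : Continuous φ) (h0 : ∀ x, 0 ≤ φ x)
    (p q : ℝ) (hpq : p ≤ q) (hp : 0 ≤ p) (hq : q ≤ 1)
    (h1 : ∀ x, p ≤ x → x ≤ q → 1 ≤ φ x) :
    q - p ≤ ∫ x in (0:ℝ)..1, φ x := by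
  have hint : ∀ a b : ℝ, IntervalIntegrable φ volume a b := fun a b => hc.intervalIntegrable a b
  rw [← intervalIntegral.integral_add_adjacent_intervals (hint 0 p) (hint p 1),
      ← intervalIntegral.integral_add_adjacent_intervals (hint p q) (hint q 1)]
  have p1 : 0 ≤ ∫ x in (0:ℝ)..p, φ x :=
    intervalIntegral.integral_nonneg hp (fun x _ => h0 x)
  have p2 : 0 ≤ ∫ x in q..(1:ℝ), φ x :=
    intervalIntegral.integral_nonneg hq (fun x _ => h0 x)
  have p3 : q - p ≤ ∫ x in p..q, φ x := by
    calc q - p = ∫ _x in p..q, (1:ℝ) := by simp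
      _ ≤ ∫ x in p..q, φ x :=
        intervalIntegral.integral_mono_on hpq intervalIntegrable_const (hint p q)
          (fun x hx => h1 x hx.1 hx.2)
  linarith


lemma ae_Omega (h : ℕ → ℝ → ℝ) (hreg : RegularSeq h) :
    ∀ᵐ x ∂(volume.restrict (Set.Icc (0:ℝ) 1)), x ∈ Omega h := by
  set μ := volume.restrict (Set.Icc (0:ℝ) 1) with hμ
  have hmeas : ∀ n, AEMeasurable (h n) μ :=
    fun n => (hreg n).1.aemeasurable measurableSet_Icc
  have hint : ∀ n, Integrable (h n) μ := fun n => (hreg n).1.integrableOn_Icc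
  have hpos : ∀ n, 0 ≤ᵐ[μ] (h n) := fun n =>
    (ae_restrict_iff' measurableSet_Icc).2 (ae_of_all _ (fun x hx => (hreg n).2.1 x hx))
  have heq : ∀ n, ∫⁻ x, ENNReal.ofReal (h n x) ∂μ = ENNReal.ofReal (∫ x, h n x ∂μ) :=
    fun n => (ofReal_integral_eq_lintegral_ofReal (hint n) (hpos n)).symm
  have hle : ∀ n, ∫⁻ x, ENNReal.ofReal (h n x) ∂μ ≤ ENNReal.ofReal ((1/2:ℝ)^n) := by
    intro n
    rw [heq n]
    apply ENNReal.ofReal_le_ofReal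
    have : (∫ x, h n x ∂μ) = ∫ x in (0:ℝ)..1, h n x := by
      rw [hμ, intervalIntegral.integral_of_le (by norm_num : (0:ℝ) ≤ 1)]
      exact (integral_Icc_eq_integral_Ioc)
    rw [this]; exact (hreg n).2.2.le
  have hsum : (∫⁻ x, ∑' n, ENNReal.ofReal (h n x) ∂μ) < ⊤ := by
    rw [lintegral_tsum (fun n => (hmeas n).ennreal_ofReal)]
    calc (∑' n, ∫⁻ x, ENNReal.ofReal (h n x) ∂μ)
        ≤ ∑' n, ENNReal.ofReal ((1/2:ℝ)^n) := ENNReal.tsum_le_tsum hle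
      _ = ENNReal.ofReal (∑' n : ℕ, (1/2:ℝ)^n) :=
          (ENNReal.ofReal_tsum_of_nonneg (fun n => by positivity)
            summable_geometric_two).symm
      _ < ⊤ := ENNReal.ofReal_lt_top
  have hae : ∀ᵐ x ∂μ, (∑' n, ENNReal.ofReal (h n x)) < ⊤ :=
    ae_lt_top' (AEMeasurable.ennreal_tsum (fun n => (hmeas n).ennreal_ofReal)) hsum.ne
  filter_upwards [hae, ae_restrict_mem measurableSet_Icc] with x hx hxI
  refine ⟨hxI, (∑' n, ENNReal.ofReal (h n x)).toReal, fun m => ?_⟩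
  have h1 : ∑ n ∈ Finset.range (m+1), ENNReal.ofReal (h n x) ≤ ∑' n, ENNReal.ofReal (h n x) :=
    ENNReal.sum_le_tsum _
  have h2 : (∑ n ∈ Finset.range (m+1), ENNReal.ofReal (h n x)).toReal
      = ∑ n ∈ Finset.range (m+1), h n x := by
    rw [ENNReal.toReal_sum (fun n _ => ENNReal.ofReal_ne_top)]
    exact Finset.sum_congr rfl (fun n _ => ENNReal.toReal_ofReal ((hreg n).2.1 x hxI))
  rw [← h2]
  exact ENNReal.toReal_mono hx.ne h1

lemma exists_point_in_dyadic (h : ℕ → ℝ → ℝ) (hreg : RegularSeq h)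
    (m l : ℕ) (hl : l < 2^m) :
    ∃ x, x ∈ Set.Ioo ((l:ℝ)/2^m) (((l:ℝ)+1)/2^m) ∩ Omega h := by
  set μ := volume.restrict (Set.Icc (0:ℝ) 1) with hμ
  by_contra hc
  push_neg at hc
  have hsub : Set.Ioo ((l:ℝ)/2^m) (((l:ℝ)+1)/2^m) ⊆ {x | ¬ x ∈ Omega h} := by
    intro x hx
    exact fun hx2 => hc x ⟨hx, hx2⟩
  have hnull : μ {x | ¬ x ∈ Omega h} = 0 := by
    have := ae_Omega h hreg
    rwa [ae_iff] at this
  have hIcc : Set.Ioo ((l:ℝ)/2^m) (((l:ℝ)+1)/2^m) ⊆ Set.Icc 0 1 := by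
    intro x hx
    have h2m : (0:ℝ) < 2^m := by positivity
    have hl' : ((l:ℝ)+1) ≤ 2^m := by
      have : (l:ℝ) + 1 ≤ ((2^m : ℕ) : ℝ) := by exact_mod_cast Nat.succ_le_of_lt hl
      simpa using this
    constructor
    · have : (0:ℝ) ≤ (l:ℝ)/2^m := by positivity
      linarith [hx.1]
    · have : ((l:ℝ)+1)/2^m ≤ 1 := by
        rw [div_le_one h2m]; exact hl'
      linarith [hx.2]
  have hpos : 0 < μ (Set.Ioo ((l:ℝ)/2^m) (((l:ℝ)+1)/2^m)) := by
    rw [hμ, Measure.restrict_apply measurableSet_Ioo]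
    rw [Set.inter_eq_self_of_subset_left hIcc]
    rw [Real.volume_Ioo]
    have h2m : (0:ℝ) < 2^m := by positivity
    have : (0:ℝ) < ((l:ℝ)+1)/2^m - (l:ℝ)/2^m := by
      have he : ((l:ℝ)+1)/2^m - (l:ℝ)/2^m = 1/2^m := by ring
      rw [he]; positivity
    simp [ENNReal.ofReal_pos, this]
  have : μ (Set.Ioo ((l:ℝ)/2^m) (((l:ℝ)+1)/2^m)) = 0 :=
    le_antisymm (hnull ▸ measure_mono hsub) zero_le
  exact absurd this hpos.ne'


/-- left endpoint of the `l`-th dyadic interval of depth `m` -/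
def dy (m l : ℕ) : ℝ := (l:ℝ)/2^m

lemma dy_mono (m : ℕ) {i j : ℕ} (h : i ≤ j) : dy m i ≤ dy m j := by
  unfold dy
  have : (i:ℝ) ≤ (j:ℝ) := by exact_mod_cast h
  gcongr


lemma dy_len (m l : ℕ) : dy m (l+1) - dy m l = (1/2:ℝ)^m := by
  unfold dy
  push_cast
  rw [div_pow, one_pow]
  ring

lemma dy_nonneg (m l : ℕ) : 0 ≤ dy m l := by unfold dy; positivity

lemma dy_le_one (m : ℕ) {l : ℕ} (h : l ≤ 2^m) : dy m l ≤ 1 := by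
  unfold dy
  rw [div_le_one (by positivity)]
  exact_mod_cast (by exact_mod_cast h : (l:ℝ) ≤ (2^m : ℕ))

/-- traps at the same depth are supported on disjoint intervals -/
lemma trap_other_eq_zero (m : ℕ) (δ : ℝ) (hδ : 0 < δ) {l l' : ℕ} (hne : l' ≠ l)
    {x : ℝ} (hx : x ∈ Set.Ioo (dy m l) (dy m (l+1))) :
    trap (dy m l') (dy m (l'+1)) δ x = 0 := by
  rcases lt_or_gt_of_ne hne with hlt | hgt
  · exact trap_eq_zero_right _ _ _ _ hδ (le_trans (dy_mono m hlt) hx.1.le)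
  · exact trap_eq_zero_left _ _ _ _ hδ (le_trans hx.2.le (dy_mono m hgt))

lemma sum_trap_of_mem (m : ℕ) (δ : ℝ) (hδ : 0 < δ) {l : ℕ} (hl : l < 2^m)
    {x : ℝ} (hx : x ∈ Set.Ioo (dy m l) (dy m (l+1))) :
    ∑ l' ∈ Finset.range (2^m), trap (dy m l') (dy m (l'+1)) δ x
      = trap (dy m l) (dy m (l+1)) δ x :=
  Finset.sum_eq_single_of_mem l (Finset.mem_range.2 hl)
    (fun l' _ hne => trap_other_eq_zero m δ hδ hne hx)

lemma exists_mem_of_sum_trap_ne_zero (m : ℕ) (δ : ℝ) (hδ : 0 < δ) {x : ℝ}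
    (h : ∑ l' ∈ Finset.range (2^m), trap (dy m l') (dy m (l'+1)) δ x ≠ 0) :
    ∃ l < 2^m, x ∈ Set.Ioo (dy m l) (dy m (l+1)) := by
  by_contra hc
  push_neg at hc
  apply h
  apply Finset.sum_eq_zero
  intro l hl
  have hl' := Finset.mem_range.1 hl
  by_contra ht
  exact hc l hl' (mem_Ioo_of_trap_ne_zero _ _ _ _ hδ ht)

lemma sum_trap_le_one (m : ℕ) (δ : ℝ) (hδ : 0 < δ) (x : ℝ) :
    ∑ l' ∈ Finset.range (2^m), trap (dy m l') (dy m (l'+1)) δ x ≤ 1 := by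
  by_cases h : ∑ l' ∈ Finset.range (2^m), trap (dy m l') (dy m (l'+1)) δ x = 0
  · rw [h]; norm_num
  · obtain ⟨l, hl, hx⟩ := exists_mem_of_sum_trap_ne_zero m δ hδ h
    rw [sum_trap_of_mem m δ hδ hl hx]
    exact trap_le_one _ _ _ _

lemma sum_trap_nonneg (m : ℕ) (δ : ℝ) (x : ℝ) :
    0 ≤ ∑ l' ∈ Finset.range (2^m), trap (dy m l') (dy m (l'+1)) δ x :=
  Finset.sum_nonneg (fun l' _ => trap_nonneg _ _ _ _)

/-- nesting of dyadic intervals -/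
lemma dyadic_nest {m M : ℕ} (hmM : m ≤ M) {j : ℕ} (hj : j < 2^M) :
    j / 2^(M-m) < 2^m ∧
    Set.Ioo (dy M j) (dy M (j+1)) ⊆
      Set.Ioo (dy m (j / 2^(M-m))) (dy m (j / 2^(M-m) + 1)) := by
  set q := 2^(M-m) with hq
  have hq0 : 0 < q := Nat.pow_pos (by norm_num)
  have hMsplit : (2:ℝ)^M = 2^m * (q:ℝ) := by
    rw [hq]
    push_cast
    rw [← pow_add]
    congr 1
    omega
  set l := j / q with hldef
  have h1 : l * q ≤ j := Nat.div_mul_le_self j q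
  have hqe : (l + 1) * q = l * q + q := by ring
  have hle : l * q = q * (j / q) := by rw [hldef]; ring
  have h2 : j + 1 ≤ (l + 1) * q := by
    have hdm := Nat.div_add_mod j q
    have hml := Nat.mod_lt j hq0
    omega
  have hMn : 2^M = 2^m * q := by
    rw [hq, ← pow_add]
    congr 1
    omega
  constructor
  · rw [hldef]
    rw [Nat.div_lt_iff_lt_mul hq0]
    omega
  · intro x hx
    have hdy1 : dy m l ≤ dy M j := by
      have : dy m l = dy M (l * q) := by
        unfold dy
        rw [hMsplit]
        have hq0' : (q:ℝ) ≠ 0 := by positivity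
        push_cast
        field_simp
      rw [this]
      exact dy_mono M h1
    have hdy2 : dy M (j+1) ≤ dy m (l+1) := by
      have : dy m (l+1) = dy M ((l+1) * q) := by
        unfold dy
        rw [hMsplit]
        have hq0' : (q:ℝ) ≠ 0 := by positivity
        push_cast
        field_simp
      rw [this]
      exact dy_mono M h2
    exact ⟨lt_of_le_of_lt hdy1 hx.1, lt_of_lt_of_le hx.2 hdy2⟩


lemma dy_Ioo (m l : ℕ) :
    Set.Ioo (dy m l) (dy m (l+1)) = Set.Ioo ((l:ℝ)/2^m) (((l:ℝ)+1)/2^m) := by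
  unfold dy; push_cast; rfl

/-- oscillation of `f` relative to the tag value on the `l`-th dyadic interval -/
def osc (D : Set ℝ) (f : ℝ → ℝ) (m : ℕ) (ζ : ℕ → ℝ) (l : ℕ) : ℝ :=
  sSup ((fun y => |f y - f (ζ l)|) '' (Set.Ioo ((l:ℝ)/2^m) (((l:ℝ)+1)/2^m) ∩ D))

section riemann

variable {D : Set ℝ} {f : ℝ → ℝ} {A ε : ℝ} {m : ℕ} {ζ : ℕ → ℝ}
variable (hM : ∀ ζ' : ℕ → ℝ, IsTagSystem D m ζ' → |RiemannSum f m ζ' - A| < ε)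
variable (hζ : IsTagSystem D m ζ)
include hM hζ

lemma swap_bound (l : ℕ) (hl : l < 2^m) (y : ℝ)
    (hy : y ∈ Set.Ioo ((l:ℝ)/2^m) (((l:ℝ)+1)/2^m) ∩ D) :
    (1/2:ℝ)^m * |f y - f (ζ l)| ≤ 2*ε := by
  set ζ' := Function.update ζ l y with hζ'
  have htag : IsTagSystem D m ζ' := by
    intro l' hl'
    by_cases he : l' = l
    · subst he; rw [hζ', Function.update_self]; exact hy
    · rw [hζ', Function.update_of_ne he]; exact hζ l' hl'
  have hdiff : RiemannSum f m ζ' - RiemannSum f m ζ = (1/2:ℝ)^m * (f y - f (ζ l)) := by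
    rw [RiemannSum, RiemannSum, ← Finset.sum_sub_distrib]
    rw [Finset.sum_eq_single l]
    · rw [hζ', Function.update_self]; ring
    · intro i _ hne
      rw [hζ', Function.update_of_ne hne]; ring
    · intro hnm; exact absurd (Finset.mem_range.2 hl) hnm
  have h1 := hM ζ' htag
  have h2 := hM ζ hζ
  have : |(1/2:ℝ)^m * (f y - f (ζ l))| ≤ |RiemannSum f m ζ' - A| + |RiemannSum f m ζ - A| := by
    rw [← hdiff]
    have : RiemannSum f m ζ' - RiemannSum f m ζ
        = (RiemannSum f m ζ' - A) - (RiemannSum f m ζ - A) := by ring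
    rw [this]
    exact abs_sub _ _
  rw [abs_mul, abs_of_nonneg (by positivity : (0:ℝ) ≤ (1/2:ℝ)^m)] at this
  linarith

lemma osc_nonempty (l : ℕ) (hl : l < 2^m) :
    ((fun y => |f y - f (ζ l)|) '' (Set.Ioo ((l:ℝ)/2^m) (((l:ℝ)+1)/2^m) ∩ D)).Nonempty :=
  ⟨|f (ζ l) - f (ζ l)|, ζ l, hζ l hl, rfl⟩

lemma osc_bddAbove (l : ℕ) (hl : l < 2^m) :
    BddAbove ((fun y => |f y - f (ζ l)|) '' (Set.Ioo ((l:ℝ)/2^m) (((l:ℝ)+1)/2^m) ∩ D)) := by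
  refine ⟨2*ε*2^m, ?_⟩
  rintro r ⟨y, hy, rfl⟩
  have := swap_bound hM hζ l hl y hy
  have h2m : (0:ℝ) < (1/2:ℝ)^m := by positivity
  rw [div_pow, one_pow] at *
  calc |f y - f (ζ l)| = (2:ℝ)^m * ((1/(2:ℝ)^m) * |f y - f (ζ l)|) := by
        field_simp
    _ ≤ (2:ℝ)^m * (2*ε) := by
        apply mul_le_mul_of_nonneg_left _ (by positivity)
        exact this
    _ = 2*ε*2^m := by ring

lemma le_osc (l : ℕ) (hl : l < 2^m) (y : ℝ)
    (hy : y ∈ Set.Ioo ((l:ℝ)/2^m) (((l:ℝ)+1)/2^m) ∩ D) :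
    |f y - f (ζ l)| ≤ osc D f m ζ l :=
  le_csSup (osc_bddAbove hM hζ l hl) ⟨y, hy, rfl⟩

lemma osc_nonneg (l : ℕ) (hl : l < 2^m) : 0 ≤ osc D f m ζ l := by
  have := le_osc hM hζ l hl (ζ l) (hζ l hl)
  have h0 : (0:ℝ) ≤ |f (ζ l) - f (ζ l)| := abs_nonneg _
  linarith

lemma sum_osc_le : ∑ l ∈ Finset.range (2^m), (1/2:ℝ)^m * osc D f m ζ l ≤ 2*ε := by
  refine le_of_forall_pos_le_add (fun η hη => ?_)
  have hch : ∀ l : ℕ, ∃ y : ℝ, l < 2^m →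
      y ∈ Set.Ioo ((l:ℝ)/2^m) (((l:ℝ)+1)/2^m) ∩ D ∧ osc D f m ζ l - η < |f y - f (ζ l)| := by
    intro l
    by_cases hl : l < 2^m
    · have hlt : osc D f m ζ l - η < osc D f m ζ l := by linarith
      obtain ⟨r, ⟨y, hy, rfl⟩, hr⟩ := exists_lt_of_lt_csSup (osc_nonempty hM hζ l hl) hlt
      exact ⟨y, fun _ => ⟨hy, hr⟩⟩
    · exact ⟨ζ l, fun h => absurd h hl⟩
  choose y hy using hch
  set ξ : ℕ → ℝ := fun l => if f (ζ l) ≤ f (y l) then y l else ζ l with hξ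
  set χ : ℕ → ℝ := fun l => if f (ζ l) ≤ f (y l) then ζ l else y l with hχ
  have hξt : IsTagSystem D m ξ := by
    intro l hl; rw [hξ]; dsimp only
    split
    · exact (hy l hl).1
    · exact hζ l hl
  have hχt : IsTagSystem D m χ := by
    intro l hl; rw [hχ]; dsimp only
    split
    · exact hζ l hl
    · exact (hy l hl).1
  have habs : ∀ l, l < 2^m → |f (y l) - f (ζ l)| = f (ξ l) - f (χ l) := by
    intro l _; rw [hξ, hχ]; dsimp only
    split
    · rename_i hc; rw [abs_of_nonneg (by linarith)]
    · rename_i hc; push_neg at hc; rw [abs_of_neg (by linarith)]; ring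
  have step : ∑ l ∈ Finset.range (2^m), (1/2:ℝ)^m * osc D f m ζ l
      ≤ ∑ l ∈ Finset.range (2^m), ((1/2:ℝ)^m * (f (ξ l) - f (χ l)) + (1/2:ℝ)^m * η) := by
    apply Finset.sum_le_sum
    intro l hl
    have hl' := Finset.mem_range.1 hl
    have h1 : osc D f m ζ l ≤ |f (y l) - f (ζ l)| + η := by
      have := (hy l hl').2; linarith
    rw [← habs l hl']
    have h2m : (0:ℝ) ≤ (1/2:ℝ)^m := by positivity
    calc (1/2:ℝ)^m * osc D f m ζ l ≤ (1/2:ℝ)^m * (|f (y l) - f (ζ l)| + η) :=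
          mul_le_mul_of_nonneg_left h1 h2m
      _ = (1/2:ℝ)^m * |f (y l) - f (ζ l)| + (1/2:ℝ)^m * η := by ring
  have hsum2 : ∑ l ∈ Finset.range (2^m), ((1/2:ℝ)^m * (f (ξ l) - f (χ l)) + (1/2:ℝ)^m * η)
      = (RiemannSum f m ξ - RiemannSum f m χ) + η := by
    rw [Finset.sum_add_distrib, Finset.sum_const, Finset.card_range]
    rw [RiemannSum, RiemannSum, ← Finset.sum_sub_distrib]
    congr 1
    · exact Finset.sum_congr rfl (fun l _ => by ring)
    · rw [nsmul_eq_mul]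
      have : ((2:ℝ)^m) * ((1/2:ℝ)^m * η) = η := by
        rw [div_pow, one_pow]; field_simp
      exact_mod_cast this
  have hfin : RiemannSum f m ξ - RiemannSum f m χ ≤ 2*ε := by
    have h1 := hM ξ hξt
    have h2 := hM χ hχt
    have := abs_sub_abs_le_abs_sub (RiemannSum f m ξ - A) (RiemannSum f m χ - A)
    have h3 : RiemannSum f m ξ - RiemannSum f m χ
        = (RiemannSum f m ξ - A) - (RiemannSum f m χ - A) := by ring
    calc RiemannSum f m ξ - RiemannSum f m χ
        ≤ |RiemannSum f m ξ - A| + |RiemannSum f m χ - A| := by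
          rw [h3]
          calc (RiemannSum f m ξ - A) - (RiemannSum f m χ - A)
              ≤ |(RiemannSum f m ξ - A) - (RiemannSum f m χ - A)| := le_abs_self _
            _ ≤ _ := abs_sub _ _
      _ ≤ 2*ε := by linarith
  linarith [step, hsum2 ▸ step]

lemma osc_le_bound (l : ℕ) (hl : l < 2^m) : osc D f m ζ l ≤ 2*ε*2^m := by
  apply csSup_le (osc_nonempty hM hζ l hl)
  rintro r ⟨y, hy, rfl⟩
  have := swap_bound hM hζ l hl y hy
  have h2m : (0:ℝ) < (1/2:ℝ)^m := by positivity
  rw [div_pow, one_pow] at *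
  calc |f y - f (ζ l)| = (2:ℝ)^m * ((1/(2:ℝ)^m) * |f y - f (ζ l)|) := by field_simp
    _ ≤ (2:ℝ)^m * (2*ε) := mul_le_mul_of_nonneg_left this (by positivity)
    _ = 2*ε*2^m := by ring

end riemann

lemma F_approx (m : ℕ) (δ : ℝ) (hδ : 0 < δ) (c : ℕ → ℝ) (B : ℝ)
    (hB : ∀ l, l < 2^m → |c l| ≤ B) {l : ℕ} (hl : l < 2^m) {x : ℝ}
    (hx : x ∈ Set.Ioo (dy m l) (dy m (l+1))) :
    |(∑ l' ∈ Finset.range (2^m), c l' * trap (dy m l') (dy m (l'+1)) δ x) - c l|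
      ≤ (B+1) * (1 - ∑ l' ∈ Finset.range (2^m), trap (dy m l') (dy m (l'+1)) δ x) := by
  have hFsum : (∑ l' ∈ Finset.range (2^m), c l' * trap (dy m l') (dy m (l'+1)) δ x)
      = c l * trap (dy m l) (dy m (l+1)) δ x :=
    Finset.sum_eq_single_of_mem l (Finset.mem_range.2 hl)
      (fun i _ hne => by rw [trap_other_eq_zero m δ hδ hne hx, mul_zero])
  rw [hFsum, sum_trap_of_mem m δ hδ hl hx]
  set t := trap (dy m l) (dy m (l+1)) δ x with ht
  have h0t : 0 ≤ t := trap_nonneg _ _ _ _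
  have h1t : t ≤ 1 := trap_le_one _ _ _ _
  have habs : |c l * t - c l| = |c l| * (1 - t) := by
    rw [show c l * t - c l = c l * (t - 1) by ring, abs_mul,
      show |t - 1| = 1 - t by rw [abs_sub_comm]; exact abs_of_nonneg (by linarith)]
  rw [habs]
  have hcl := hB l hl
  have hBnn : (0:ℝ) ≤ |c l| := abs_nonneg _
  nlinarith

lemma F_zero (m : ℕ) (δ : ℝ) (c : ℕ → ℝ) {x : ℝ}
    (h : ∑ l' ∈ Finset.range (2^m), trap (dy m l') (dy m (l'+1)) δ x = 0) :
    (∑ l' ∈ Finset.range (2^m), c l' * trap (dy m l') (dy m (l'+1)) δ x) = 0 := by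
  apply Finset.sum_eq_zero
  intro i hi
  have := (Finset.sum_eq_zero_iff_of_nonneg
    (fun i _ => trap_nonneg (dy m i) (dy m (i+1)) δ x)).1 h i hi
  rw [this, mul_zero]

lemma beta_ge (m : ℕ) (δ : ℝ) (hδ : 0 < δ) (O : ℕ → ℝ) (hO : ∀ l, l < 2^m → 0 ≤ O l)
    {l : ℕ} (hl : l < 2^m) {x : ℝ} (hx : x ∈ Set.Icc (dy m l) (dy m (l+1))) :
    O l ≤ ∑ l' ∈ Finset.range (2^m), O l' * trap (dy m l' - δ) (dy m (l'+1) + δ) δ x := by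
  have hone : trap (dy m l - δ) (dy m (l+1) + δ) δ x = 1 := by
    apply trap_eq_one _ _ _ _ hδ
    · linarith [hx.1]
    · linarith [hx.2]
  calc O l = O l * trap (dy m l - δ) (dy m (l+1) + δ) δ x := by rw [hone, mul_one]
    _ ≤ ∑ l' ∈ Finset.range (2^m), O l' * trap (dy m l' - δ) (dy m (l'+1) + δ) δ x :=
      Finset.single_le_sum
        (f := fun i => O i * trap (dy m i - δ) (dy m (i+1) + δ) δ x)
        (fun i hi => mul_nonneg (hO i (Finset.mem_range.1 hi)) (trap_nonneg _ _ _ _))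
        (Finset.mem_range.2 hl)

lemma int_trapIn_le (m l : ℕ) (δ : ℝ) (hδ : 0 < δ) (hl : l < 2^m) :
    (∫ x in (0:ℝ)..1, trap (dy m l) (dy m (l+1)) δ x) ≤ (1/2:ℝ)^m := by
  rw [← dy_len m l]
  apply integral_le_of_support _ (continuous_trap _ _ _) (trap_nonneg _ _ _)
    (trap_le_one _ _ _) _ _ (by linarith [dy_len m l, (by positivity : (0:ℝ) < (1/2:ℝ)^m)])
    (by linarith [dy_nonneg m l]) (by linarith [dy_le_one m (Nat.succ_le_of_lt hl)])
  intro x hx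
  by_contra hc
  exact hx (mem_Ioo_of_trap_ne_zero _ _ _ _ hδ hc)

lemma int_trapIn_ge (m l : ℕ) (δ : ℝ) (hδ : 0 < δ) (hδ2 : δ ≤ (1/2:ℝ)^m / 4)
    (hl : l < 2^m) :
    (1/2:ℝ)^m - 2*δ ≤ ∫ x in (0:ℝ)..1, trap (dy m l) (dy m (l+1)) δ x := by
  have hlen := dy_len m l
  have h1 : dy m l + δ ≤ dy m (l+1) - δ := by linarith
  have := integral_ge_of_one (fun x => trap (dy m l) (dy m (l+1)) δ x)
    (continuous_trap _ _ _) (trap_nonneg _ _ _)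
    (dy m l + δ) (dy m (l+1) - δ) h1
    (by linarith [dy_nonneg m l])
    (by linarith [dy_le_one m (Nat.succ_le_of_lt hl)])
    (fun x hx1 hx2 => le_of_eq (trap_eq_one _ _ _ _ hδ hx1 hx2).symm)
  linarith

lemma int_trapOut_le (m l : ℕ) (δ : ℝ) (hδ : 0 < δ) (hδ2 : δ ≤ (1/2:ℝ)^m / 4)
    (hl : l < 2^m) :
    (∫ x in (0:ℝ)..1, trap (dy m l - δ) (dy m (l+1) + δ) δ x) ≤ (1/2:ℝ)^m + 2*δ := by
  have hlen := dy_len m l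
  have hm1 : (1/2:ℝ)^m ≤ 1 := by
    apply pow_le_one₀ <;> norm_num
  have key : (dy m (l+1) + δ) - (dy m l - δ) = (1/2:ℝ)^m + 2*δ := by linarith
  rw [← key]
  apply integral_le_of_support _ (continuous_trap _ _ _) (trap_nonneg _ _ _)
    (trap_le_one _ _ _) _ _ (by linarith)
    (by linarith [dy_nonneg m l]) (by linarith [dy_le_one m (Nat.succ_le_of_lt hl)])
  intro x hx
  by_contra hc
  exact hx (mem_Ioo_of_trap_ne_zero _ _ _ _ hδ hc)


end S17

set_option maxHeartbeats 2000000 in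
/-- Main theorem: every tag-Riemann integrable function on an almost full subset of
`[0,1]` is summable, with the same integral. -/
theorem stmt17 (D : Set ℝ) (hD : D ⊆ Set.Icc 0 1) (hfull : AlmostFull D)
    (f : ℝ → ℝ) (A : ℝ) (hf : TagRiemannIntegrable D f A) :
    SummableWithIntegral D f A := by
  classical
  obtain ⟨h, hreg, hΩ⟩ := hfull
  -- tag systems at every depth
  have htagex : ∀ m l : ℕ, ∃ x : ℝ,
      l < 2^m → x ∈ Set.Ioo ((l:ℝ)/2^m) (((l:ℝ)+1)/2^m) ∩ D := by
    intro m l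
    by_cases hl : l < 2^m
    · obtain ⟨x, hx1, hx2⟩ := S17.exists_point_in_dyadic h hreg m l hl
      exact ⟨x, fun _ => ⟨hx1, hΩ hx2⟩⟩
    · exact ⟨0, fun hc => absurd hc hl⟩
  choose ζ hζ using htagex
  have hζtag : ∀ m, IsTagSystem D m (ζ m) := fun m l hl => hζ m l hl
  -- moduli
  have hfk : ∀ k : ℕ, ∃ M : ℕ, ∀ m ≥ M, ∀ ζ' : ℕ → ℝ, IsTagSystem D m ζ' →
      |RiemannSum f m ζ' - A| < (1/2:ℝ)^(k+4) := fun k => hf _ (by positivity)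
  choose Mf hMf using hfk
  set em : ℕ → ℕ := fun k => Nat.rec (Mf 0) (fun k ih => max (Mf (k+1)) ih) k with hem
  have hemM : ∀ k, Mf k ≤ em k := by
    intro k
    cases k with
    | zero => exact le_refl _
    | succ k => exact le_max_left _ _
  have hemmono : ∀ k, em k ≤ em (k+1) := fun k => le_max_right _ _
  have hMk : ∀ k, ∀ ζ' : ℕ → ℝ, IsTagSystem D (em k) ζ' →
      |RiemannSum f (em k) ζ' - A| < (1/2:ℝ)^(k+4) :=
    fun k => hMf k (em k) (hemM k)
  -- the construction
  set c : ℕ → ℕ → ℝ := fun k l => f (ζ (em k) l) with hc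
  set B : ℕ → ℝ := fun k => ∑ l ∈ Finset.range (2^(em k)), |c k l| with hB
  set δ : ℕ → ℝ := fun k =>
    min ((1/2:ℝ)^(em k) / 4) ((1/2:ℝ)^k / (64 * (B k + 1) * 4^(em k))) with hδ
  set O : ℕ → ℕ → ℝ := fun k l => S17.osc D f (em k) (ζ (em k)) l with hO
  set F : ℕ → ℝ → ℝ := fun k x => ∑ l ∈ Finset.range (2^(em k)),
    c k l * S17.trap (S17.dy (em k) l) (S17.dy (em k) (l+1)) (δ k) x with hF
  set S : ℕ → ℝ → ℝ := fun k x => ∑ l ∈ Finset.range (2^(em k)),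
    S17.trap (S17.dy (em k) l) (S17.dy (em k) (l+1)) (δ k) x with hS
  set lam : ℕ → ℝ → ℝ := fun k x => (B k + 1) * (1 - S k x) with hlam
  set β : ℕ → ℝ → ℝ := fun k x => ∑ l ∈ Finset.range (2^(em k)),
    O k l * S17.trap (S17.dy (em k) l - δ k) (S17.dy (em k) (l+1) + δ k) (δ k) x with hβ
  set g : ℕ → ℝ → ℝ := fun n x => (1/2) * h n x + β n x + lam n x with hg
  -- basic facts
  have hBnn : ∀ k, 0 ≤ B k := fun k => Finset.sum_nonneg (fun l _ => abs_nonneg _)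
  have hcB : ∀ k, ∀ l, l < 2^(em k) → |c k l| ≤ B k := by
    intro k l hl
    exact Finset.single_le_sum (f := fun l => |c k l|) (fun i _ => abs_nonneg _)
      (Finset.mem_range.2 hl)
  have hδpos : ∀ k, 0 < δ k := by
    intro k
    apply lt_min (by positivity)
    have := hBnn k
    positivity
  have hδ4 : ∀ k, δ k ≤ (1/2:ℝ)^(em k) / 4 := fun k => min_le_left _ _
  have hδB : ∀ k, (B k + 1) * 4^(em k) * δ k ≤ (1/2:ℝ)^(k+6) := by
    intro k
    have hb1 : (0:ℝ) < B k + 1 := by linarith [hBnn k]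
    have h4 : (0:ℝ) < 4^(em k) := by positivity
    have hle : δ k ≤ (1/2:ℝ)^k / (64 * (B k + 1) * 4^(em k)) := min_le_right _ _
    have e1 : (B k + 1) * 4^(em k) * ((1/2:ℝ)^k / (64 * (B k + 1) * 4^(em k)))
        = (1/2:ℝ)^k / 64 := by
      field_simp
    have e2 : ((1/2:ℝ))^(k+6) = (1/2:ℝ)^k / 64 := by
      rw [pow_add]
      norm_num
      ring
    rw [e2, ← e1]
    apply mul_le_mul_of_nonneg_left hle (by positivity)
  -- oscillation facts
  have hOnn : ∀ k l, l < 2^(em k) → 0 ≤ O k l :=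
    fun k l hl => S17.osc_nonneg (hMk k) (hζtag (em k)) l hl
  have hOle : ∀ k l, l < 2^(em k) → O k l ≤ 2*(1/2:ℝ)^(k+4)*2^(em k) :=
    fun k l hl => S17.osc_le_bound (hMk k) (hζtag (em k)) l hl
  have hOsum : ∀ k, ∑ l ∈ Finset.range (2^(em k)), (1/2:ℝ)^(em k) * O k l
      ≤ 2*(1/2:ℝ)^(k+4) := fun k => S17.sum_osc_le (hMk k) (hζtag (em k))
  have hyosc : ∀ k l, l < 2^(em k) → ∀ y ∈ Set.Ioo (S17.dy (em k) l)
      (S17.dy (em k) (l+1)) ∩ D, |f y - c k l| ≤ O k l := by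
    intro k l hl y hy
    rw [S17.dy_Ioo] at hy
    exact S17.le_osc (hMk k) (hζtag (em k)) l hl y hy
  have hζmem : ∀ k l, l < 2^(em k) →
      ζ (em k) l ∈ Set.Ioo (S17.dy (em k) l) (S17.dy (em k) (l+1)) ∩ D := by
    intro k l hl
    rw [S17.dy_Ioo]
    exact hζtag (em k) l hl
  -- continuity
  have hFc : ∀ k, Continuous (F k) := by
    intro k
    apply continuous_finset_sum
    intro l _
    exact continuous_const.mul (S17.continuous_trap _ _ _)
  have hSc : ∀ k, Continuous (S k) := by
    intro k
    apply continuous_finset_sum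
    intro l _
    exact S17.continuous_trap _ _ _
  have hβc : ∀ k, Continuous (β k) := by
    intro k
    apply continuous_finset_sum
    intro l _
    exact continuous_const.mul (S17.continuous_trap _ _ _)
  have hlamc : ∀ k, Continuous (lam k) := by
    intro k
    exact continuous_const.mul (continuous_const.sub (hSc k))
  -- nonnegativity
  have hSle1 : ∀ k x, S k x ≤ 1 := fun k x => S17.sum_trap_le_one _ _ (hδpos k) x
  have hSnn : ∀ k x, 0 ≤ S k x := fun k x => S17.sum_trap_nonneg _ _ x
  have hlamnn : ∀ k x, 0 ≤ lam k x := by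
    intro k x
    apply mul_nonneg (by linarith [hBnn k])
    linarith [hSle1 k x]
  have hβnn : ∀ k x, 0 ≤ β k x := by
    intro k x
    apply Finset.sum_nonneg
    intro l hl
    exact mul_nonneg (hOnn k l (Finset.mem_range.1 hl)) (S17.trap_nonneg _ _ _ _)
  -- integrability
  have hCint : ∀ (φ : ℝ → ℝ), Continuous φ → IntervalIntegrable φ volume 0 1 :=
    fun φ hφ => hφ.intervalIntegrable 0 1
  have hhint : ∀ n, IntervalIntegrable (h n) volume 0 1 := by
    intro n
    apply ContinuousOn.intervalIntegrable
    rw [Set.uIcc_of_le (by norm_num : (0:ℝ) ≤ 1)]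
    exact (hreg n).1
  -- integral of S
  have hSint : ∀ k, (∫ x in (0:ℝ)..1, S k x) = ∑ l ∈ Finset.range (2^(em k)),
      ∫ x in (0:ℝ)..1, S17.trap (S17.dy (em k) l) (S17.dy (em k) (l+1)) (δ k) x := by
    intro k
    rw [hS]
    exact intervalIntegral.integral_finset_sum
      (fun l _ => hCint _ (S17.continuous_trap _ _ _))
  have hone : ∀ k, (2:ℝ)^(em k) * (1/2:ℝ)^(em k) = 1 := by
    intro k
    rw [← mul_pow]
    norm_num
  have hSub : ∀ k, (∫ x in (0:ℝ)..1, S k x) ≤ 1 := by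
    intro k
    rw [hSint k]
    calc (∑ l ∈ Finset.range (2^(em k)),
        ∫ x in (0:ℝ)..1, S17.trap (S17.dy (em k) l) (S17.dy (em k) (l+1)) (δ k) x)
        ≤ ∑ l ∈ Finset.range (2^(em k)), (1/2:ℝ)^(em k) :=
          Finset.sum_le_sum (fun l hl =>
            S17.int_trapIn_le (em k) l (δ k) (hδpos k) (Finset.mem_range.1 hl))
      _ = 1 := by
          rw [Finset.sum_const, Finset.card_range, nsmul_eq_mul]
          push_cast
          all_goals exact hone k
  have hSlb : ∀ k, 1 - (2:ℝ)^(em k) * (2 * δ k) ≤ ∫ x in (0:ℝ)..1, S k x := by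
    intro k
    rw [hSint k]
    calc (1:ℝ) - (2:ℝ)^(em k) * (2 * δ k)
        = ∑ l ∈ Finset.range (2^(em k)), ((1/2:ℝ)^(em k) - 2 * δ k) := by
          rw [Finset.sum_const, Finset.card_range, nsmul_eq_mul]
          push_cast
          rw [mul_sub, hone k]
      _ ≤ _ := Finset.sum_le_sum (fun l hl =>
          S17.int_trapIn_ge (em k) l (δ k) (hδpos k) (hδ4 k) (Finset.mem_range.1 hl))
  -- integral of lam
  have hlamint : ∀ k, (∫ x in (0:ℝ)..1, lam k x) ≤ (1/2:ℝ)^(k+5) := by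
    intro k
    have e1 : (∫ x in (0:ℝ)..1, lam k x)
        = (B k + 1) * (1 - ∫ x in (0:ℝ)..1, S k x) := by
      rw [hlam]
      rw [intervalIntegral.integral_const_mul]
      congr 1
      rw [intervalIntegral.integral_sub intervalIntegrable_const (hCint _ (hSc k))]
      simp
    rw [e1]
    have h24 : (2:ℝ)^(em k) ≤ 4^(em k) := by
      apply pow_le_pow_left₀ <;> norm_num
    have hb1 : (0:ℝ) ≤ B k + 1 := by linarith [hBnn k]
    have h1 : 1 - (∫ x in (0:ℝ)..1, S k x) ≤ (2:ℝ)^(em k) * (2 * δ k) := by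
      linarith [hSlb k]
    have h2 : (B k + 1) * (1 - ∫ x in (0:ℝ)..1, S k x)
        ≤ (B k + 1) * ((2:ℝ)^(em k) * (2 * δ k)) := mul_le_mul_of_nonneg_left h1 hb1
    have h3 : (B k + 1) * ((2:ℝ)^(em k) * (2 * δ k))
        ≤ 2 * ((B k + 1) * 4^(em k) * δ k) := by
      have hkey : 0 ≤ (B k + 1) * δ k * ((4:ℝ)^(em k) - 2^(em k)) :=
        mul_nonneg (mul_nonneg hb1 (hδpos k).le) (sub_nonneg.2 h24)
      nlinarith [hkey]
    have h4 : 2 * ((B k + 1) * 4^(em k) * δ k) ≤ 2 * (1/2:ℝ)^(k+6) := by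
      linarith [hδB k]
    have e2 : 2 * ((1/2:ℝ))^(k+6) = (1/2:ℝ)^(k+5) := by
      rw [pow_succ]
      ring
    linarith
  -- integral of β
  have h4δ : ∀ k, (4:ℝ)^(em k) * δ k ≤ (1/2:ℝ)^(k+6) := by
    intro k
    have h1 := hδB k
    have h2 : (0:ℝ) ≤ B k * 4^(em k) * δ k := by
      apply mul_nonneg (mul_nonneg (hBnn k) (by positivity)) (hδpos k).le
    nlinarith
  have hβint : ∀ k, (∫ x in (0:ℝ)..1, β k x) ≤ 3 * (1/2:ℝ)^(k+4) := by
    intro k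
    have e1 : (∫ x in (0:ℝ)..1, β k x) = ∑ l ∈ Finset.range (2^(em k)),
        O k l * ∫ x in (0:ℝ)..1,
          S17.trap (S17.dy (em k) l - δ k) (S17.dy (em k) (l+1) + δ k) (δ k) x := by
      rw [hβ]
      rw [intervalIntegral.integral_finset_sum
        (fun l _ => (hCint _ (S17.continuous_trap _ _ _)).const_mul _)]
      exact Finset.sum_congr rfl
        (fun l _ => intervalIntegral.integral_const_mul _ _)
    rw [e1]
    have step1 : ∀ l ∈ Finset.range (2^(em k)),
        O k l * (∫ x in (0:ℝ)..1,
          S17.trap (S17.dy (em k) l - δ k) (S17.dy (em k) (l+1) + δ k) (δ k) x)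
        ≤ O k l * ((1/2:ℝ)^(em k) + 2 * δ k) := by
      intro l hl
      apply mul_le_mul_of_nonneg_left _ (hOnn k l (Finset.mem_range.1 hl))
      exact S17.int_trapOut_le (em k) l (δ k) (hδpos k) (hδ4 k) (Finset.mem_range.1 hl)
    have step2 : (∑ l ∈ Finset.range (2^(em k)), O k l * ((1/2:ℝ)^(em k) + 2 * δ k))
        = (∑ l ∈ Finset.range (2^(em k)), (1/2:ℝ)^(em k) * O k l)
          + (∑ l ∈ Finset.range (2^(em k)), O k l) * (2 * δ k) := by
      calc (∑ l ∈ Finset.range (2^(em k)), O k l * ((1/2:ℝ)^(em k) + 2 * δ k))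
          = ∑ l ∈ Finset.range (2^(em k)),
            ((1/2:ℝ)^(em k) * O k l + O k l * (2 * δ k)) :=
            Finset.sum_congr rfl (fun l _ => by ring)
        _ = (∑ l ∈ Finset.range (2^(em k)), (1/2:ℝ)^(em k) * O k l)
            + ∑ l ∈ Finset.range (2^(em k)), O k l * (2 * δ k) :=
            Finset.sum_add_distrib
        _ = _ := by rw [← Finset.sum_mul]
    have hOtot : (∑ l ∈ Finset.range (2^(em k)), O k l)
        ≤ 2*(1/2:ℝ)^(k+4) * 4^(em k) := by
      calc (∑ l ∈ Finset.range (2^(em k)), O k l)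
          ≤ ∑ l ∈ Finset.range (2^(em k)), 2*(1/2:ℝ)^(k+4)*2^(em k) :=
            Finset.sum_le_sum (fun l hl => hOle k l (Finset.mem_range.1 hl))
        _ = (2:ℝ)^(em k) * (2*(1/2:ℝ)^(k+4)*2^(em k)) := by
            rw [Finset.sum_const, Finset.card_range, nsmul_eq_mul]
            push_cast
            ring
        _ = 2*(1/2:ℝ)^(k+4) * 4^(em k) := by
            rw [show (4:ℝ)^(em k) = 2^(em k)*2^(em k) by rw [← mul_pow]; norm_num]
            ring
    have hOtotnn : 0 ≤ ∑ l ∈ Finset.range (2^(em k)), O k l :=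
      Finset.sum_nonneg (fun l hl => hOnn k l (Finset.mem_range.1 hl))
    have h4' : (1/2:ℝ)^(k+6) ≤ 1/4 := by
      calc (1/2:ℝ)^(k+6) ≤ (1/2:ℝ)^2 :=
            pow_le_pow_of_le_one (by norm_num) (by norm_num) (by omega)
        _ = 1/4 := by norm_num
    have hterm2 : (∑ l ∈ Finset.range (2^(em k)), O k l) * (2 * δ k)
        ≤ (1/2:ℝ)^(k+4) := by
      calc (∑ l ∈ Finset.range (2^(em k)), O k l) * (2 * δ k)
          ≤ (2*(1/2:ℝ)^(k+4) * 4^(em k)) * (2 * δ k) := by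
            apply mul_le_mul_of_nonneg_right hOtot
            have := hδpos k
            positivity
        _ = 4*(1/2:ℝ)^(k+4) * (4^(em k) * δ k) := by ring
        _ ≤ 4*(1/2:ℝ)^(k+4) * (1/4) := by
            apply mul_le_mul_of_nonneg_left (le_trans (h4δ k) h4') (by positivity)
        _ = (1/2:ℝ)^(k+4) := by ring
    calc (∑ l ∈ Finset.range (2^(em k)),
        O k l * ∫ x in (0:ℝ)..1,
          S17.trap (S17.dy (em k) l - δ k) (S17.dy (em k) (l+1) + δ k) (δ k) x)
        ≤ ∑ l ∈ Finset.range (2^(em k)), O k l * ((1/2:ℝ)^(em k) + 2 * δ k) :=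
          Finset.sum_le_sum step1
      _ = (∑ l ∈ Finset.range (2^(em k)), (1/2:ℝ)^(em k) * O k l)
          + (∑ l ∈ Finset.range (2^(em k)), O k l) * (2 * δ k) := step2
      _ ≤ 2*(1/2:ℝ)^(k+4) + (1/2:ℝ)^(k+4) := add_le_add (hOsum k) hterm2
      _ = 3 * (1/2:ℝ)^(k+4) := by ring
  -- regularity of g
  have hgreg : RegularSeq g := by
    intro n
    refine ⟨?_, ?_, ?_⟩
    · exact ((continuousOn_const.mul (hreg n).1).add (hβc n).continuousOn).add
        (hlamc n).continuousOn
    · intro x hx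
      have h1 := (hreg n).2.1 x hx
      have h2 := hβnn n x
      have h3 := hlamnn n x
      show 0 ≤ 1/2 * h n x + β n x + lam n x
      linarith
    · have hi1 : IntervalIntegrable (fun x => 1/2 * h n x) volume 0 1 :=
        (hhint n).const_mul _
      have e : (∫ x in (0:ℝ)..1, g n x) = (∫ x in (0:ℝ)..1, 1/2 * h n x)
          + (∫ x in (0:ℝ)..1, β n x) + (∫ x in (0:ℝ)..1, lam n x) := by
        rw [hg]
        rw [intervalIntegral.integral_add (hi1.add (hCint _ (hβc n))) (hCint _ (hlamc n)),
          intervalIntegral.integral_add hi1 (hCint _ (hβc n))]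
      have eh : (∫ x in (0:ℝ)..1, 1/2 * h n x) = 1/2 * ∫ x in (0:ℝ)..1, h n x :=
        intervalIntegral.integral_const_mul _ _
      have h1 := (hreg n).2.2
      have h2 := hβint n
      have h3 := hlamint n
      have e4 : ((1/2:ℝ))^(n+4) = (1/2:ℝ)^n * (1/16) := by rw [pow_add]; norm_num
      have e5 : ((1/2:ℝ))^(n+5) = (1/2:ℝ)^n * (1/32) := by rw [pow_add]; norm_num
      have hpn : (0:ℝ) < (1/2:ℝ)^n := by positivity
      rw [e, eh]
      rw [e4] at h2
      rw [e5] at h3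
      linarith
  -- Omega g ⊆ D
  have hYsub : Omega g ⊆ D := by
    intro x hx
    obtain ⟨hxI, γ, hγ⟩ := hx
    apply hΩ
    refine ⟨hxI, 2*γ, fun m' => ?_⟩
    have hterm : ∀ n, 1/2 * h n x ≤ g n x := by
      intro n
      have h2 := hβnn n x
      have h3 := hlamnn n x
      show _ ≤ 1/2 * h n x + β n x + lam n x
      linarith
    have hsum : ∑ n ∈ Finset.range (m'+1), (1/2) * h n x
        ≤ ∑ n ∈ Finset.range (m'+1), g n x :=
      Finset.sum_le_sum (fun n _ => hterm n)
    have e : ∑ n ∈ Finset.range (m'+1), (1/2:ℝ) * h n x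
        = (1/2:ℝ) * ∑ n ∈ Finset.range (m'+1), h n x := by
      rw [Finset.mul_sum]
    rw [e] at hsum
    have := hγ m'
    linarith
  -- pointwise convergence on Omega g
  have hconv : ∀ x ∈ Omega g, Tendsto (fun k => F k x) atTop (nhds (f x)) := by
    intro x hx
    have hxD : x ∈ D := hYsub hx
    obtain ⟨hxI, γ, hγ⟩ := hx
    have hγ0 : (0:ℝ) ≤ γ := by
      have := hγ 0
      have h0 := (hgreg 0).2.1 x hxI
      rw [Finset.sum_range_one] at this
      linarith
    have hterm : ∀ n, β n x + lam n x ≤ g n x := by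
      intro n
      have h1 := (hreg n).2.1 x hxI
      show _ ≤ 1/2 * h n x + β n x + lam n x
      linarith
    have hbdd : ∀ N, ∑ n ∈ Finset.range N, (β n x + lam n x) ≤ γ := by
      intro N
      cases N with
      | zero => simpa using hγ0
      | succ N =>
        calc ∑ n ∈ Finset.range (N+1), (β n x + lam n x)
            ≤ ∑ n ∈ Finset.range (N+1), g n x := Finset.sum_le_sum (fun n _ => hterm n)
          _ ≤ γ := hγ N
    have hsummable : Summable (fun n => β n x + lam n x) :=
      summable_of_sum_range_le (fun n => add_nonneg (hβnn n x) (hlamnn n x)) hbdd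
    have hten0 : Tendsto (fun n => β n x + lam n x) atTop (nhds 0) :=
      hsummable.tendsto_atTop_zero
    have hβ0 : Tendsto (fun n => β n x) atTop (nhds 0) :=
      squeeze_zero (fun n => hβnn n x) (fun n => le_add_of_nonneg_right (hlamnn n x)) hten0
    have hlam0 : Tendsto (fun n => lam n x) atTop (nhds 0) :=
      squeeze_zero (fun n => hlamnn n x) (fun n => le_add_of_nonneg_left (hβnn n x)) hten0
    have hev : ∀ᶠ k in atTop, lam k x < 1 :=
      hlam0.eventually (gt_mem_nhds (by norm_num : (0:ℝ) < 1))
    have hevb : ∀ᶠ k in atTop, |F k x - f x| ≤ β k x + lam k x := by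
      filter_upwards [hev] with k hk
      have hSne : S k x ≠ 0 := by
        intro h0
        have he : lam k x = B k + 1 := by
          show (B k + 1) * (1 - S k x) = B k + 1
          rw [h0]
          ring
        rw [he] at hk
        linarith [hBnn k]
      obtain ⟨l, hl, hxl⟩ := S17.exists_mem_of_sum_trap_ne_zero (em k) (δ k) (hδpos k) hSne
      have t1 : |F k x - c k l| ≤ lam k x :=
        S17.F_approx (em k) (δ k) (hδpos k) (c k) (B k) (hcB k) hl hxl
      have t2 : |f x - c k l| ≤ O k l := hyosc k l hl x ⟨hxl, hxD⟩
      have t3 : O k l ≤ β k x :=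
        S17.beta_ge (em k) (δ k) (hδpos k) (O k) (hOnn k) hl (Set.Ioo_subset_Icc_self hxl)
      calc |F k x - f x| = |(F k x - c k l) + (c k l - f x)| := by ring_nf
        _ ≤ |F k x - c k l| + |c k l - f x| := abs_add_le _ _
        _ = |F k x - c k l| + |f x - c k l| := by rw [abs_sub_comm (c k l)]
        _ ≤ β k x + lam k x := by linarith
    have habs0 : Tendsto (fun k => |F k x - f x|) atTop (nhds 0) := by
      apply squeeze_zero' (Filter.Eventually.of_forall fun k => abs_nonneg _) hevb
      have := hβ0.add hlam0
      simpa using this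
    rw [tendsto_iff_dist_tendsto_zero]
    simpa [Real.dist_eq] using habs0
  -- pointwise bound on |F (k+1) - F k|
  have hdiffpt : ∀ k, ∀ x : ℝ, |F (k+1) x - F k x| ≤ lam (k+1) x + β k x + lam k x := by
    intro k x
    have hq0 : 0 < 2 ^ (em (k+1) - em k) := Nat.pow_pos (by norm_num)
    have h2M : 2^(em (k+1)) = 2^(em k) * 2^(em (k+1) - em k) := by
      rw [← pow_add]
      congr 1
      have := hemmono k
      omega
    by_cases hS1 : S (k+1) x = 0
    · by_cases hS0 : S k x = 0
      · have hF1 : F (k+1) x = 0 := S17.F_zero _ _ _ hS1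
        have hF0 : F k x = 0 := S17.F_zero _ _ _ hS0
        rw [hF1, hF0]
        simp only [sub_zero, abs_zero]
        have := hlamnn (k+1) x
        have := hβnn k x
        have := hlamnn k x
        linarith
      · obtain ⟨l, hl, hxl⟩ := S17.exists_mem_of_sum_trap_ne_zero (em k) (δ k) (hδpos k) hS0
        set j := l * 2 ^ (em (k+1) - em k) with hjdef
        have hj : j < 2^(em (k+1)) := by
          rw [h2M, hjdef]
          exact (Nat.mul_lt_mul_right hq0).2 hl
        have hjq : j / 2 ^ (em (k+1) - em k) = l := by
          rw [hjdef]
          exact Nat.mul_div_cancel _ hq0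
        have hnest := (S17.dyadic_nest (hemmono k) hj).2
        rw [hjq] at hnest
        have hζj := hζmem (k+1) j hj
        have hζjl : ζ (em (k+1)) j ∈ Set.Ioo (S17.dy (em k) l) (S17.dy (em k) (l+1)) ∩ D :=
          ⟨hnest hζj.1, hζj.2⟩
        have t2 : |c (k+1) j - c k l| ≤ O k l := hyosc k l hl _ hζjl
        have t2b : O k l ≤ β k x :=
          S17.beta_ge (em k) (δ k) (hδpos k) (O k) (hOnn k) hl (Set.Ioo_subset_Icc_self hxl)
        have t1 : |F k x - c k l| ≤ lam k x :=
          S17.F_approx (em k) (δ k) (hδpos k) (c k) (B k) (hcB k) hl hxl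
        have hF1 : F (k+1) x = 0 := S17.F_zero _ _ _ hS1
        have t3 : |c (k+1) j| ≤ lam (k+1) x := by
          have he : lam (k+1) x = B (k+1) + 1 := by
            show (B (k+1) + 1) * (1 - S (k+1) x) = B (k+1) + 1
            rw [hS1]
            ring
          rw [he]
          linarith [hcB (k+1) j hj]
        rw [hF1]
        have hdec : (0:ℝ) - F k x = (-(F k x - c k l)) + (-(c k l - c (k+1) j)) + (- c (k+1) j) := by
          ring
        rw [hdec]
        calc |(-(F k x - c k l)) + (-(c k l - c (k+1) j)) + (- c (k+1) j)|
            ≤ |(-(F k x - c k l))| + |(-(c k l - c (k+1) j))| + |(- c (k+1) j)| :=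
              abs_add_three _ _ _
          _ = |F k x - c k l| + |c (k+1) j - c k l| + |c (k+1) j| := by
              rw [abs_neg, abs_neg, abs_neg, abs_sub_comm (c k l)]
          _ ≤ lam (k+1) x + β k x + lam k x := by linarith
    · obtain ⟨j, hj, hxj⟩ :=
        S17.exists_mem_of_sum_trap_ne_zero (em (k+1)) (δ (k+1)) (hδpos (k+1)) hS1
      obtain ⟨hl, hsub⟩ := S17.dyadic_nest (hemmono k) hj
      set l := j / 2 ^ (em (k+1) - em k) with hldef
      have hxl : x ∈ Set.Ioo (S17.dy (em k) l) (S17.dy (em k) (l+1)) := hsub hxj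
      have t1 : |F (k+1) x - c (k+1) j| ≤ lam (k+1) x :=
        S17.F_approx (em (k+1)) (δ (k+1)) (hδpos (k+1)) (c (k+1)) (B (k+1))
          (hcB (k+1)) hj hxj
      have hζj := hζmem (k+1) j hj
      have hζjl : ζ (em (k+1)) j ∈ Set.Ioo (S17.dy (em k) l) (S17.dy (em k) (l+1)) ∩ D :=
        ⟨hsub hζj.1, hζj.2⟩
      have t2 : |c (k+1) j - c k l| ≤ O k l := hyosc k l hl _ hζjl
      have t2b : O k l ≤ β k x :=
        S17.beta_ge (em k) (δ k) (hδpos k) (O k) (hOnn k) hl (Set.Ioo_subset_Icc_self hxl)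
      have t3 : |F k x - c k l| ≤ lam k x :=
        S17.F_approx (em k) (δ k) (hδpos k) (c k) (B k) (hcB k) hl hxl
      have hdec : F (k+1) x - F k x
          = (F (k+1) x - c (k+1) j) + (c (k+1) j - c k l) + (-(F k x - c k l)) := by
        ring
      rw [hdec]
      calc |(F (k+1) x - c (k+1) j) + (c (k+1) j - c k l) + (-(F k x - c k l))|
          ≤ |F (k+1) x - c (k+1) j| + |c (k+1) j - c k l| + |(-(F k x - c k l))| :=
            abs_add_three _ _ _
        _ = |F (k+1) x - c (k+1) j| + |c (k+1) j - c k l| + |F k x - c k l| := by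
            rw [abs_neg]
        _ ≤ lam (k+1) x + β k x + lam k x := by linarith
  -- integral bound for differences
  have hFdiffint : ∀ k, (∫ x in (0:ℝ)..1, |F (k+1) x - F k x|) < (1/2:ℝ)^k := by
    intro k
    have hint1 : IntervalIntegrable (fun x => |F (k+1) x - F k x|) volume 0 1 :=
      hCint _ ((hFc (k+1)).sub (hFc k)).abs
    have hint2 : IntervalIntegrable (fun x => lam (k+1) x + β k x + lam k x) volume 0 1 :=
      hCint _ (((hlamc (k+1)).add (hβc k)).add (hlamc k))
    have hmono : (∫ x in (0:ℝ)..1, |F (k+1) x - F k x|)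
        ≤ ∫ x in (0:ℝ)..1, (lam (k+1) x + β k x + lam k x) :=
      intervalIntegral.integral_mono_on (by norm_num) hint1 hint2
        (fun x _ => hdiffpt k x)
    have hsplit : (∫ x in (0:ℝ)..1, (lam (k+1) x + β k x + lam k x))
        = (∫ x in (0:ℝ)..1, lam (k+1) x) + (∫ x in (0:ℝ)..1, β k x)
          + (∫ x in (0:ℝ)..1, lam k x) := by
      rw [intervalIntegral.integral_add ((hCint _ (hlamc (k+1))).add (hCint _ (hβc k)))
        (hCint _ (hlamc k)),
        intervalIntegral.integral_add (hCint _ (hlamc (k+1))) (hCint _ (hβc k))]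
    have h1 := hlamint (k+1)
    have h2 := hβint k
    have h3 := hlamint k
    have e1 : ((1/2:ℝ))^(k+1+5) = (1/2:ℝ)^k * (1/64) := by
      rw [pow_add, pow_add]
      norm_num
      ring
    have e2 : ((1/2:ℝ))^(k+4) = (1/2:ℝ)^k * (1/16) := by rw [pow_add]; norm_num
    have e3 : ((1/2:ℝ))^(k+5) = (1/2:ℝ)^k * (1/32) := by rw [pow_add]; norm_num
    rw [e1] at h1
    rw [e2] at h2
    rw [e3] at h3
    have hpk : (0:ℝ) < (1/2:ℝ)^k := by positivity
    calc (∫ x in (0:ℝ)..1, |F (k+1) x - F k x|)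
        ≤ (∫ x in (0:ℝ)..1, lam (k+1) x) + (∫ x in (0:ℝ)..1, β k x)
          + (∫ x in (0:ℝ)..1, lam k x) := hsplit ▸ hmono
      _ < (1/2:ℝ)^k := by linarith
  -- integral of F tends to A
  have hFR : ∀ k, |(∫ x in (0:ℝ)..1, F k x) - RiemannSum f (em k) (ζ (em k))|
      ≤ B k * (2 * δ k) := by
    intro k
    have e1 : (∫ x in (0:ℝ)..1, F k x) = ∑ l ∈ Finset.range (2^(em k)),
        c k l * ∫ x in (0:ℝ)..1,
          S17.trap (S17.dy (em k) l) (S17.dy (em k) (l+1)) (δ k) x := by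
      rw [hF]
      rw [intervalIntegral.integral_finset_sum
        (fun l _ => (hCint _ (S17.continuous_trap _ _ _)).const_mul _)]
      exact Finset.sum_congr rfl (fun l _ => intervalIntegral.integral_const_mul _ _)
    have e2 : RiemannSum f (em k) (ζ (em k))
        = ∑ l ∈ Finset.range (2^(em k)), c k l * (1/2:ℝ)^(em k) := by
      rw [RiemannSum]
      exact Finset.sum_congr rfl (fun l _ => mul_comm _ _)
    have e3 : (∑ l ∈ Finset.range (2^(em k)),
        (c k l * (∫ x in (0:ℝ)..1,
          S17.trap (S17.dy (em k) l) (S17.dy (em k) (l+1)) (δ k) x)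
          - c k l * (1/2:ℝ)^(em k)))
        = ∑ l ∈ Finset.range (2^(em k)), c k l * ((∫ x in (0:ℝ)..1,
          S17.trap (S17.dy (em k) l) (S17.dy (em k) (l+1)) (δ k) x)
          - (1/2:ℝ)^(em k)) :=
      Finset.sum_congr rfl (fun l _ => by ring)
    rw [e1, e2, ← Finset.sum_sub_distrib, e3]
    calc |∑ l ∈ Finset.range (2^(em k)), c k l * ((∫ x in (0:ℝ)..1,
          S17.trap (S17.dy (em k) l) (S17.dy (em k) (l+1)) (δ k) x)
          - (1/2:ℝ)^(em k))|
        ≤ ∑ l ∈ Finset.range (2^(em k)), |c k l * ((∫ x in (0:ℝ)..1,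
          S17.trap (S17.dy (em k) l) (S17.dy (em k) (l+1)) (δ k) x)
          - (1/2:ℝ)^(em k))| := Finset.abs_sum_le_sum_abs _ _
      _ ≤ ∑ l ∈ Finset.range (2^(em k)), |c k l| * (2 * δ k) := by
          apply Finset.sum_le_sum
          intro l hl
          have hl' := Finset.mem_range.1 hl
          rw [abs_mul]
          apply mul_le_mul_of_nonneg_left _ (abs_nonneg _)
          apply abs_le.2
          constructor
          · linarith [S17.int_trapIn_ge (em k) l (δ k) (hδpos k) (hδ4 k) hl']
          · linarith [S17.int_trapIn_le (em k) l (δ k) (hδpos k) hl', hδpos k]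
      _ = B k * (2 * δ k) := by rw [← Finset.sum_mul]
  have hFA : ∀ k, |(∫ x in (0:ℝ)..1, F k x) - A| ≤ (1/2:ℝ)^(k+3) := by
    intro k
    have h1 := hFR k
    have h2 := le_of_lt (hMk k (ζ (em k)) (hζtag (em k)))
    have h41 : (1:ℝ) ≤ 4^(em k) := one_le_pow₀ (by norm_num)
    have hstep : B k ≤ (B k + 1) * 4^(em k) := by nlinarith [hBnn k]
    have h3 : B k * (2 * δ k) ≤ 2 * ((B k + 1) * 4^(em k) * δ k) := by
      have := (hδpos k).le
      nlinarith [hstep, hδpos k]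
    have h4 : B k * (2 * δ k) ≤ 2 * (1/2:ℝ)^(k+6) := le_trans h3 (by linarith [hδB k])
    have e1 : (2:ℝ) * (1/2:ℝ)^(k+6) = (1/2:ℝ)^k * (1/32) := by rw [pow_add]; norm_num; ring
    have e2 : ((1/2:ℝ))^(k+4) = (1/2:ℝ)^k * (1/16) := by rw [pow_add]; norm_num
    have e3 : ((1/2:ℝ))^(k+3) = (1/2:ℝ)^k * (1/8) := by rw [pow_add]; norm_num
    have htr : |(∫ x in (0:ℝ)..1, F k x) - A|
        ≤ |(∫ x in (0:ℝ)..1, F k x) - RiemannSum f (em k) (ζ (em k))|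
          + |RiemannSum f (em k) (ζ (em k)) - A| := by
      have : (∫ x in (0:ℝ)..1, F k x) - A
          = ((∫ x in (0:ℝ)..1, F k x) - RiemannSum f (em k) (ζ (em k)))
            + (RiemannSum f (em k) (ζ (em k)) - A) := by ring
      rw [this]
      exact abs_add_le _ _
    rw [e1] at h4
    rw [e2] at h2
    rw [e3]
    have hpk : (0:ℝ) < (1/2:ℝ)^k := by positivity
    linarith
  have hIntTendsto : Tendsto (fun k => ∫ x in (0:ℝ)..1, F k x) atTop (nhds A) := by
    rw [tendsto_iff_dist_tendsto_zero]
    apply squeeze_zero' (g := fun k => (1/2:ℝ)^(k+3))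
      (Filter.Eventually.of_forall fun k => dist_nonneg)
      (Filter.Eventually.of_forall fun k => by rw [Real.dist_eq]; exact hFA k)
    have hg0 : Tendsto (fun k : ℕ => (1/2:ℝ)^k) atTop (nhds 0) :=
      tendsto_pow_atTop_nhds_zero_of_lt_one (by norm_num) (by norm_num)
    have heq : (fun k : ℕ => (1/2:ℝ)^(k+3)) = fun k => (1/2:ℝ)^k * (1/2:ℝ)^3 := by
      funext k
      rw [pow_add]
    rw [heq]
    have := hg0.mul_const ((1/2:ℝ)^3)
    rw [zero_mul] at this
    exact this
  -- conclusion
  exact ⟨Omega g, F, ⟨g, hgreg, subset_rfl⟩, hYsub, fun k => (hFc k).continuousOn,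
    hFdiffint, hconv, hIntTendsto⟩
end
end
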